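/- arXiv:2305.14265 — 4 statements merged into one kernel-verified Lean document; each statement's English description precedes it below -/
import Mathlib

section
/- Let X be a set of parameter values, D a set of decision rules, R : X × D → [0, ∞] a risk function, {C_B}_{B ∈ 𝓑} a family of nonempty subsets of X, R_max(B, δ) = sup_{x ∈ C_B} R(x, δ), and R*(B) = inf_{δ ∈ D} R_max(B, δ) with R*(B) > 0 for all B. For R̄ > 0 define the constrained adaptation value A*(𝓑; R̄) = inf over δ ∈ D satisfying sup_{B ∈ 𝓑} R_max(B, δ) ≤ R̄ of sup_{B ∈ 𝓑} R_max(B, δ)/R*(B), and for t > 0 define the weighted minimax value Ã*(t) = inf_{δ ∈ D} sup_{B ∈ 𝓑} R_max(B, δ)/min{R*(B), t}. Then any δ that attains A*(𝓑; R̄) also attains Ã*(t) with t = R̄ / A*(𝓑; R̄). -/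
open scoped ENNReal

/-- **Constrained adaptation: solutions solve the weighted minimax problem.**
With `Rmax B δ = sup_{x ∈ C B} R x δ` and `Rstar B = inf_δ Rmax B δ > 0`, let
`Astar = A*(𝓑; R̄)` be the infimum of `sup_B Rmax B δ / Rstar B` over decision rules `δ`
satisfying the worst-case risk constraint `sup_B Rmax B δ ≤ R̄` (for `R̄ > 0`).
Then any `δ₀` attaining `A*(𝓑; R̄)` also attains the weighted minimax value
`Ã*(t) = inf_δ sup_B Rmax B δ / min {Rstar B, t}` with `t = R̄ / A*(𝓑; R̄)`. -/
theorem stmt_4 {X D I : Type*} [Nonempty D]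
    (R : X → D → ℝ≥0∞) (C : I → Set X) (hC : ∀ B, (C B).Nonempty)
    (Rmax : I → D → ℝ≥0∞) (hRmax : ∀ B δ, Rmax B δ = ⨆ x ∈ C B, R x δ)
    (Rstar : I → ℝ≥0∞) (hRstar : ∀ B, Rstar B = ⨅ δ, Rmax B δ)
    (hpos : ∀ B, 0 < Rstar B)
    (Rbar : ℝ≥0∞) (hRbar : 0 < Rbar)
    (Astar : ℝ≥0∞)
    (hAstar : Astar = ⨅ δ ∈ {δ : D | (⨆ B, Rmax B δ) ≤ Rbar}, ⨆ B, Rmax B δ / Rstar B)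
    (δ₀ : D) (hfeas : (⨆ B, Rmax B δ₀) ≤ Rbar)
    (hatt : (⨆ B, Rmax B δ₀ / Rstar B) = Astar) :
    (⨆ B, Rmax B δ₀ / min (Rstar B) (Rbar / Astar))
      = ⨅ δ : D, ⨆ B, Rmax B δ / min (Rstar B) (Rbar / Astar) := by
  set t := Rbar / Astar with ht
  refine le_antisymm (le_iInf fun δ => ?_) (iInf_le _ δ₀)
  rcases eq_or_ne Astar ∞ with hA | hAtop
  · -- Astar = ∞ : t = 0, RHS term = ∞
    have hI : Nonempty I := by
      by_contra h
      rw [not_nonempty_iff] at h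
      rw [iSup_of_empty] at hatt
      rw [hA] at hatt
      exact ENNReal.zero_ne_top hatt
    obtain ⟨B⟩ := hI
    have ht0 : t = 0 := by rw [ht, hA, ENNReal.div_top]
    have hRB : Rmax B δ ≠ 0 := by
      intro h
      have h2 : Rstar B ≤ Rmax B δ := (hRstar B) ▸ (iInf_le (fun δ => Rmax B δ) δ)
      rw [h] at h2
      exact (hpos B).ne' (le_antisymm h2 (zero_le))
    have : Rmax B δ / min (Rstar B) t = ∞ := by
      rw [ht0, min_eq_right (zero_le), ENNReal.div_zero hRB]
    calc (⨆ B, Rmax B δ₀ / min (Rstar B) t) ≤ ∞ := le_top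
      _ = Rmax B δ / min (Rstar B) t := this.symm
      _ ≤ _ := le_iSup (fun B => Rmax B δ / min (Rstar B) t) B
  rcases eq_or_ne Astar 0 with hA0 | hA0
  · -- Astar = 0 : t = ∞, min = Rstar, LHS = Astar = 0
    have ht0 : t = ∞ := by rw [ht, hA0, ENNReal.div_zero hRbar.ne']
    have : (⨆ B, Rmax B δ₀ / min (Rstar B) t) = 0 := by
      simp only [ht0, min_eq_left le_top]
      rw [hatt, hA0]
    exact this ▸ zero_le
  -- main case 0 < Astar < ∞
  have hle : (⨆ B, Rmax B δ₀ / min (Rstar B) t) ≤ Astar := by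
    refine iSup_le fun B => ?_
    rcases le_total (Rstar B) t with h | h
    · rw [min_eq_left h]
      exact hatt ▸ le_iSup (fun B => Rmax B δ₀ / Rstar B) B
    · rw [min_eq_right h]
      rcases eq_or_ne Rbar ∞ with hb | hb
      · have : t = ∞ := by rw [ht, hb, ENNReal.top_div_of_ne_top hAtop]
        rw [this, ENNReal.div_top]; exact zero_le
      · have h1 : Rmax B δ₀ ≤ Rbar := le_trans (le_iSup (fun B => Rmax B δ₀) B) hfeas
        have h2 : Rbar / t = Astar := by
          rw [ht]
          refine ((ENNReal.eq_div_iff ?_ ?_).mpr (ENNReal.div_mul_cancel hA0 hAtop)).symm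
          · intro h
            rcases ENNReal.div_eq_zero_iff.mp h with h | h
            exacts [hRbar.ne' h, hAtop h]
          · exact fun h => hb (by
              rw [ENNReal.div_eq_top] at h
              rcases h with ⟨_, h⟩ | ⟨h, _⟩
              exacts [absurd h hA0, h])
        exact h2 ▸ ENNReal.div_le_div_right h1 t
  refine le_trans hle ?_
  by_cases hf : (⨆ B, Rmax B δ) ≤ Rbar
  · have h1 : Astar ≤ ⨆ B, Rmax B δ / Rstar B := by
      rw [hAstar]
      exact iInf₂_le δ hf
    refine le_trans h1 (iSup_mono fun B => ?_)
    exact ENNReal.div_le_div_left (min_le_left _ _) _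
  · obtain ⟨B, hB⟩ := lt_iSup_iff.mp (not_le.mp hf)
    have hbtop : Rbar ≠ ∞ := hB.ne_top
    have h1 : Astar ≤ Rbar / t :=
      (ENNReal.le_div_iff_mul_le (Or.inr hRbar.ne') (Or.inr hbtop)).mpr ENNReal.mul_div_le
    calc Astar ≤ Rbar / t := h1
      _ ≤ Rmax B δ / t := ENNReal.div_le_div_right hB.le t
      _ ≤ Rmax B δ / min (Rstar B) t := ENNReal.div_le_div_left (min_le_right _ _) _
      _ ≤ _ := le_iSup (fun B => Rmax B δ / min (Rstar B) t) B
end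

section
/- Let X be a set of parameter values, D a convex set of decision rules with R(x, ·) convex on D for every x ∈ X, R : X × D → [0, ∞] a risk function, {C_B}_{B ∈ 𝓑} a family of nonempty subsets of X, R_max(B, δ) = sup_{x ∈ C_B} R(x, δ), and R*(B) = inf_{δ ∈ D} R_max(B, δ) with R*(B) > 0 for all B. For R̄ > 0 let A*(𝓑; R̄) = inf over δ ∈ D with sup_{B ∈ 𝓑} R_max(B, δ) ≤ R̄ of sup_{B ∈ 𝓑} R_max(B, δ)/R*(B), and for t > 0 let Ã*(t) = inf_{δ ∈ D} sup_{B ∈ 𝓑} R_max(B, δ)/min{R*(B), t} and R̃(t) = t · Ã*(t). If R̃(t) > inf_{δ ∈ D} sup_{B ∈ 𝓑} R_max(B, δ) and inf_{B ∈ 𝓑} R*(B) > 0, then A*(𝓑; R̃(t)) = Ã*(t), and any δ attaining Ã*(t) also attains A*(𝓑; R̄) with R̄ = R̃(t). -/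
open scoped ENNReal

private lemma aux_div_mul (a b c : ℝ≥0∞) : a / b * c = a * (c / b) := by
  rw [div_eq_mul_inv, div_eq_mul_inv, mul_right_comm, mul_assoc]

/-- If `u = min 2⁻¹ ((c/(G+1)).toReal)` then `ofReal u * G ≤ c`. -/
private lemma aux_small (c G : ℝ≥0∞) (hG : G ≠ ∞) :
    ENNReal.ofReal (min 2⁻¹ ((c / (G + 1)).toReal)) * G ≤ c := by
  by_cases hc : c = ∞
  · simp [hc]
  have hfin : c / (G + 1) ≠ ∞ := (ENNReal.div_lt_top hc (by simp)).ne
  have h1 : ENNReal.ofReal (min 2⁻¹ ((c / (G + 1)).toReal)) ≤ c / (G + 1) := by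
    refine (ENNReal.ofReal_le_ofReal (min_le_right _ _)).trans ?_
    rw [ENNReal.ofReal_toReal hfin]
  calc ENNReal.ofReal (min 2⁻¹ ((c / (G + 1)).toReal)) * G
      ≤ c / (G + 1) * G := mul_le_mul_left h1 _
    _ = c * (G / (G + 1)) := aux_div_mul c (G + 1) G
    _ ≤ c * 1 := mul_le_mul_right
        (ENNReal.div_le_of_le_mul (by simpa using le_self_add)) _
    _ = c := mul_one c

private lemma aux_pos (c G : ℝ≥0∞) (hc : c ≠ 0) (hc' : c ≠ ∞) (hG : G ≠ ∞) :
    0 < min 2⁻¹ ((c / (G + 1)).toReal) := by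
  refine lt_min (by norm_num) (ENNReal.toReal_pos ?_ ?_)
  · exact (ENNReal.div_pos hc (by simp [hG, ENNReal.add_eq_top])).ne'
  · exact (ENNReal.div_lt_top hc' (by simp)).ne

private lemma aux_le_one (c G : ℝ≥0∞) : min 2⁻¹ ((c / (G + 1)).toReal) ≤ 1 :=
  (min_le_left _ _).trans (by norm_num)

/-- **Constrained adaptation (Lemma on equivalence with weighted minimax).**
Here `D` is a convex set of (possibly randomized) decision rules in a real vector space,
`R x ·` is convex on `D` for each parameter value `x`, `Rmax B δ = sup_{x ∈ C B} R x δ`,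
and `Rstar B = inf_{δ ∈ D} Rmax B δ > 0`.  For `t > 0`, let
`Atil = Ã*(t) = inf_{δ ∈ D} sup_B Rmax B δ / min {Rstar B, t}` and `Rtil = t · Ã*(t)`.
If `Rtil > inf_{δ ∈ D} sup_B Rmax B δ` and `inf_B Rstar B > 0`, then the constrained
adaptation value `A*(𝓑; Rtil)` equals `Ã*(t)`, and any `δ₀ ∈ D` attaining `Ã*(t)` is
feasible for and attains `A*(𝓑; R̄)` with `R̄ = Rtil`. -/
theorem stmt_5 {X V I : Type*} [AddCommGroup V] [Module ℝ V]
    (D : Set V) (hDconv : Convex ℝ D) (hDne : D.Nonempty)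
    (R : X → V → ℝ≥0∞)
    (hRconv : ∀ x, ∀ δ ∈ D, ∀ δ' ∈ D, ∀ s : ℝ, 0 ≤ s → s ≤ 1 →
      R x (s • δ + (1 - s) • δ')
        ≤ ENNReal.ofReal s * R x δ + ENNReal.ofReal (1 - s) * R x δ')
    (C : I → Set X) (hC : ∀ B, (C B).Nonempty)
    (Rmax : I → V → ℝ≥0∞) (hRmax : ∀ B δ, Rmax B δ = ⨆ x ∈ C B, R x δ)
    (Rstar : I → ℝ≥0∞) (hRstar : ∀ B, Rstar B = ⨅ δ ∈ D, Rmax B δ)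
    (hpos : ∀ B, 0 < Rstar B)
    (t : ℝ≥0∞) (ht : 0 < t)
    (Atil : ℝ≥0∞) (hAtil : Atil = ⨅ δ ∈ D, ⨆ B, Rmax B δ / min (Rstar B) t)
    (Rtil : ℝ≥0∞) (hRtil : Rtil = t * Atil)
    (hgap : (⨅ δ ∈ D, ⨆ B, Rmax B δ) < Rtil)
    (hinf : 0 < ⨅ B, Rstar B) :
    ((⨅ δ ∈ {δ ∈ D | (⨆ B, Rmax B δ) ≤ Rtil}, ⨆ B, Rmax B δ / Rstar B) = Atil) ∧
    (∀ δ₀ ∈ D, (⨆ B, Rmax B δ₀ / min (Rstar B) t) = Atil →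
      ((⨆ B, Rmax B δ₀) ≤ Rtil ∧
        (⨆ B, Rmax B δ₀ / Rstar B)
          = ⨅ δ ∈ {δ ∈ D | (⨆ B, Rmax B δ) ≤ Rtil}, ⨆ B, Rmax B δ / Rstar B)) := by
  -- basic positivity
  have hRt0 : Rtil ≠ 0 := (zero_le.trans_lt hgap).ne'
  have hA0 : Atil ≠ 0 := fun h => hRt0 (by rw [hRtil, h, mul_zero])
  -- a rule `δ'` strictly beating the budget
  have hgap' := hgap
  simp only [iInf_lt_iff] at hgap'
  obtain ⟨δ', hδ'D, hδ'⟩ := hgap'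
  have hh'top : (⨆ B, Rmax B δ') ≠ ∞ := hδ'.ne_top
  have hRstar_le : ∀ B, Rstar B ≤ ⨆ B', Rmax B' δ' := fun B => by
    rw [hRstar]
    exact (iInf₂_le δ' hδ'D).trans (le_iSup (fun B' => Rmax B' δ') B)
  have hRs_ne : ∀ B, Rstar B ≠ ∞ := fun B =>
    fun h => hh'top (top_le_iff.mp (h ▸ hRstar_le B))
  have hg'top : (⨆ B, Rmax B δ' / Rstar B) ≠ ∞ := by
    refine fun h => (ENNReal.div_lt_top hh'top hinf.ne').ne (top_le_iff.mp ?_)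
    rw [← h]
    exact iSup_le fun B =>
      ENNReal.div_le_div (le_iSup (fun B => Rmax B δ') B) (iInf_le _ B)
  -- convexity of weighted sup-risks
  have hmix : ∀ δ ∈ D, ∀ δ'' ∈ D, ∀ s : ℝ, 0 ≤ s → s ≤ 1 → ∀ w : I → ℝ≥0∞,
      (⨆ B, Rmax B (s • δ + (1 - s) • δ'') / w B)
        ≤ ENNReal.ofReal s * (⨆ B, Rmax B δ / w B)
          + ENNReal.ofReal (1 - s) * (⨆ B, Rmax B δ'' / w B) := by
    intro δ hδ δ'' hδ'' s hs0 hs1 w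
    refine iSup_le fun B => ?_
    have h1 : Rmax B (s • δ + (1 - s) • δ'')
        ≤ ENNReal.ofReal s * Rmax B δ + ENNReal.ofReal (1 - s) * Rmax B δ'' := by
      simp only [hRmax]
      refine iSup₂_le fun x hx => ?_
      exact (hRconv x δ hδ δ'' hδ'' s hs0 hs1).trans
        (add_le_add
          (mul_le_mul_right (le_iSup₂ (f := fun x _ => R x δ) x hx) _)
          (mul_le_mul_right (le_iSup₂ (f := fun x _ => R x δ'') x hx) _))
    calc Rmax B (s • δ + (1 - s) • δ'') / w B
        ≤ (ENNReal.ofReal s * Rmax B δ + ENNReal.ofReal (1 - s) * Rmax B δ'') / w B :=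
          ENNReal.div_le_div h1 le_rfl
      _ = ENNReal.ofReal s * (Rmax B δ / w B)
          + ENNReal.ofReal (1 - s) * (Rmax B δ'' / w B) := by
          rw [ENNReal.add_div, mul_div_assoc, mul_div_assoc]
      _ ≤ _ := add_le_add
          (mul_le_mul_right (le_iSup (fun B => Rmax B δ / w B) B) _)
          (mul_le_mul_right (le_iSup (fun B => Rmax B δ'' / w B) B) _)
  -- f ≤ max(g, h/t)
  have hfmax : ∀ δ : V, (⨆ B, Rmax B δ / min (Rstar B) t)
      ≤ max (⨆ B, Rmax B δ / Rstar B) ((⨆ B, Rmax B δ) / t) := by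
    intro δ
    refine iSup_le fun B => ?_
    rcases le_total (Rstar B) t with hm | hm
    · rw [min_eq_left hm]
      exact le_max_of_le_left (le_iSup (fun B => Rmax B δ / Rstar B) B)
    · rw [min_eq_right hm]
      exact le_max_of_le_right
        (ENNReal.div_le_div (le_iSup (fun B => Rmax B δ) B) le_rfl)
  -- Atil is a lower bound of f on D
  have hAle : ∀ δ ∈ D, Atil ≤ ⨆ B, Rmax B δ / min (Rstar B) t := fun δ hδ => by
    rw [hAtil]; exact iInf₂_le δ hδ
  -- g ≤ f and h/t ≤ f
  have hg_le_f : ∀ δ : V, (⨆ B, Rmax B δ / Rstar B)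
      ≤ ⨆ B, Rmax B δ / min (Rstar B) t := fun δ =>
    iSup_mono fun B => ENNReal.div_le_div le_rfl (min_le_left _ _)
  have hht_le_f : ∀ δ : V, (⨆ B, Rmax B δ) / t
      ≤ ⨆ B, Rmax B δ / min (Rstar B) t := fun δ => by
    rw [ENNReal.iSup_div]
    exact iSup_mono fun B => ENNReal.div_le_div le_rfl (min_le_right _ _)
  -- Part (≥): any feasible δ has weighted risk ≥ Atil
  have claimA : ∀ δ ∈ D, (⨆ B, Rmax B δ) ≤ Rtil →
      Atil ≤ ⨆ B, Rmax B δ / Rstar B := by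
    intro δ hδD hfeas
    by_contra hlt
    push_neg at hlt
    have hgδ_ne : (⨆ B, Rmax B δ / Rstar B) ≠ ∞ := hlt.ne_top
    have hhδ : (⨆ B, Rmax B δ)
        ≤ (⨆ B, Rmax B δ / Rstar B) * (⨆ B, Rmax B δ') := by
      refine iSup_le fun B => ?_
      have h2 : Rmax B δ ≤ (⨆ B, Rmax B δ / Rstar B) * Rstar B :=
        (ENNReal.div_le_iff (hpos B).ne' (hRs_ne B)).mp
          (le_iSup (fun B => Rmax B δ / Rstar B) B)
      exact h2.trans (mul_le_mul_right (hRstar_le B) _)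
    rcases eq_or_ne Atil ∞ with hAtop | hAne
    · -- then f δ < ∞ contradicts Atil ≤ f δ
      have hfin : (⨆ B, Rmax B δ / min (Rstar B) t) < ∞ := by
        refine (hfmax δ).trans_lt (max_lt hgδ_ne.lt_top ?_)
        exact ENNReal.div_lt_top
          (fun h => (ENNReal.mul_ne_top hgδ_ne hh'top) (top_le_iff.mp (h ▸ hhδ)))
          ht.ne'
      exact hfin.ne (top_le_iff.mp (hAtop ▸ hAle δ hδD))
    · -- mixing argument
      have hHt : (⨆ B, Rmax B δ) / t ≤ Atil :=
        ENNReal.div_le_of_le_mul (by rw [mul_comm]; exact hRtil ▸ hfeas)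
      have hH't : (⨆ B, Rmax B δ') / t < Atil := by
        rcases eq_or_ne t ∞ with rfl | htne
        · simpa [ENNReal.div_top] using pos_iff_ne_zero.mpr hA0
        · refine (ENNReal.div_lt_iff (Or.inl ht.ne') (Or.inl htne)).mpr ?_
          rw [mul_comm]
          exact hRtil ▸ hδ'
      set d : ℝ≥0∞ := Atil - (⨆ B, Rmax B δ / Rstar B) with hd
      have hd0 : d ≠ 0 := (tsub_pos_iff_lt.mpr hlt).ne'
      have hdtop : d ≠ ∞ := fun h => hAne (top_le_iff.mp (h ▸ tsub_le_self))
      have hε0lt : d / 2 < d := ENNReal.half_lt_self hd0 hdtop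
      have hε00 : d / 2 ≠ 0 := by
        simp [ENNReal.div_eq_zero_iff, hd0]
      set u : ℝ := min 2⁻¹ ((d / 2 / ((⨆ B, Rmax B δ' / Rstar B) + 1)).toReal)
        with hu
      have hu0 : 0 < u := aux_pos _ _ hε00
        (fun h => hdtop (by simpa [ENNReal.div_eq_top] using h)) hg'top
      have hu1 : u ≤ 1 := aux_le_one _ _
      have hsmall : ENNReal.ofReal u * (⨆ B, Rmax B δ' / Rstar B) ≤ d / 2 :=
        aux_small _ _ hg'top
      set s : ℝ := 1 - u with hs
      have hs0 : 0 ≤ s := by simp [hs]; linarith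
      have hs1 : s ≤ 1 := by simp [hs]; linarith
      have hsu : 1 - s = u := by simp [hs]
      have hmem : s • δ + (1 - s) • δ' ∈ D :=
        hDconv hδD hδ'D hs0 (by rw [hsu]; exact hu0.le) (by ring)
      -- g part
      have hG : (⨆ B, Rmax B (s • δ + (1 - s) • δ') / Rstar B) < Atil := by
        calc (⨆ B, Rmax B (s • δ + (1 - s) • δ') / Rstar B)
            ≤ ENNReal.ofReal s * (⨆ B, Rmax B δ / Rstar B)
              + ENNReal.ofReal (1 - s) * (⨆ B, Rmax B δ' / Rstar B) :=
              hmix δ hδD δ' hδ'D s hs0 hs1 Rstar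
          _ ≤ (⨆ B, Rmax B δ / Rstar B) + d / 2 := by
              rw [hsu]
              exact add_le_add
                (mul_le_of_le_one_left zero_le (ENNReal.ofReal_le_one.mpr hs1))
                hsmall
          _ < (⨆ B, Rmax B δ / Rstar B) + d :=
              ENNReal.add_lt_add_left hgδ_ne hε0lt
          _ = Atil := add_tsub_cancel_of_le hlt.le
      -- h/t part
      have hH : (⨆ B, Rmax B (s • δ + (1 - s) • δ')) / t < Atil := by
        have h0 : (⨆ B, Rmax B (s • δ + (1 - s) • δ')) / t
            ≤ ENNReal.ofReal s * ((⨆ B, Rmax B δ) / t)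
              + ENNReal.ofReal (1 - s) * ((⨆ B, Rmax B δ') / t) := by
          rw [ENNReal.iSup_div, ENNReal.iSup_div, ENNReal.iSup_div]
          exact hmix δ hδD δ' hδ'D s hs0 hs1 (fun _ => t)
        refine h0.trans_lt ?_
        calc ENNReal.ofReal s * ((⨆ B, Rmax B δ) / t)
              + ENNReal.ofReal (1 - s) * ((⨆ B, Rmax B δ') / t)
            ≤ ENNReal.ofReal s * Atil
              + ENNReal.ofReal (1 - s) * ((⨆ B, Rmax B δ') / t) :=
              add_le_add_left (mul_le_mul_right hHt _) _
          _ < ENNReal.ofReal s * Atil + ENNReal.ofReal (1 - s) * Atil := by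
              refine ENNReal.add_lt_add_left
                (ENNReal.mul_ne_top ENNReal.ofReal_ne_top hAne) ?_
              refine ENNReal.mul_lt_mul_right ?_ ENNReal.ofReal_ne_top hH't
              rw [hsu]
              exact (ENNReal.ofReal_pos.mpr hu0).ne'
          _ = Atil := by
              rw [← add_mul, ← ENNReal.ofReal_add hs0 (by rw [hsu]; exact hu0.le),
                (by ring : s + (1 - s) = 1), ENNReal.ofReal_one, one_mul]
      exact absurd (hAle _ hmem)
        (not_le.mpr ((hfmax _).trans_lt (max_lt hG hH)))
  -- Part (≤)
  have claimB : (⨅ δ ∈ {δ ∈ D | (⨆ B, Rmax B δ) ≤ Rtil}, ⨆ B, Rmax B δ / Rstar B)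
      ≤ Atil := by
    rcases eq_or_ne Rtil ∞ with hRt | hRt
    · rw [hAtil]
      refine le_iInf₂ fun δ hδ => ?_
      exact le_trans (iInf₂_le δ ⟨hδ, by rw [hRt]; exact le_top⟩) (hg_le_f δ)
    · have htne : t ≠ ∞ := fun h => hRt (by rw [hRtil, h, ENNReal.top_mul hA0])
      have hAne : Atil ≠ ∞ := fun h => hRt (by rw [hRtil, h, ENNReal.mul_top ht.ne'])
      refine ENNReal.le_of_forall_pos_le_add fun ε hε _ => ?_
      have hε2 : ((ε : ℝ≥0∞) / 2) ≠ 0 := by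
        simp [ENNReal.div_eq_zero_iff, hε.ne']
      -- weight u
      set u : ℝ := min 2⁻¹ (((ε : ℝ≥0∞) / 2 / ((⨆ B, Rmax B δ' / Rstar B) + 1)).toReal)
        with hu
      have hu0 : 0 < u := aux_pos _ _ hε2 (by simp [ENNReal.div_eq_top]) hg'top
      have hu1 : u ≤ 1 := aux_le_one _ _
      have hsmall : ENNReal.ofReal u * (⨆ B, Rmax B δ' / Rstar B) ≤ (ε : ℝ≥0∞) / 2 :=
        aux_small _ _ hg'top
      -- the slack
      set Δ : ℝ≥0∞ := Rtil - (⨆ B, Rmax B δ') with hΔ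
      have hΔ0 : Δ ≠ 0 := (tsub_pos_iff_lt.mpr hδ').ne'
      -- tolerance ε'
      set ε' : ℝ≥0∞ := min (ENNReal.ofReal u * Δ / t) ((ε : ℝ≥0∞) / 2) with hε'
      have hε'0 : ε' ≠ 0 := by
        refine (lt_min ?_ (pos_iff_ne_zero.mpr hε2)).ne'
        exact ENNReal.div_pos
          (mul_ne_zero (ENNReal.ofReal_pos.mpr hu0).ne' hΔ0) htne
      -- pick a nearly optimal δ
      have hlt : (⨅ δ ∈ D, ⨆ B, Rmax B δ / min (Rstar B) t) < Atil + ε' := by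
        rw [← hAtil]; exact ENNReal.lt_add_right hAne hε'0
      simp only [iInf_lt_iff] at hlt
      obtain ⟨δ, hδD, hfδ⟩ := hlt
      have hgδ : (⨆ B, Rmax B δ / Rstar B) ≤ Atil + ε' := (hg_le_f δ).trans hfδ.le
      have hhδ : (⨆ B, Rmax B δ) ≤ (Atil + ε') * t :=
        (ENNReal.div_le_iff ht.ne' htne).mp ((hht_le_f δ).trans hfδ.le)
      -- the mixture
      set s : ℝ := 1 - u with hs
      have hs0 : 0 ≤ s := by simp [hs]; linarith
      have hs1 : s ≤ 1 := by simp [hs]; linarith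
      have hsu : 1 - s = u := by simp [hs]
      have hmem : s • δ + (1 - s) • δ' ∈ D :=
        hDconv hδD hδ'D hs0 (by rw [hsu]; exact hu0.le) (by ring)
      have hkey : ENNReal.ofReal s * (ε' * t) ≤ ENNReal.ofReal u * Δ := by
        calc ENNReal.ofReal s * (ε' * t)
            ≤ ε' * t := mul_le_of_le_one_left zero_le
              (ENNReal.ofReal_le_one.mpr hs1)
          _ ≤ (ENNReal.ofReal u * Δ / t) * t := mul_le_mul_left (min_le_left _ _) t
          _ = ENNReal.ofReal u * Δ := ENNReal.div_mul_cancel ht.ne' htne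
      have hfeas_s : (⨆ B, Rmax B (s • δ + (1 - s) • δ')) ≤ Rtil := by
        have h0 : (⨆ B, Rmax B (s • δ + (1 - s) • δ'))
            ≤ ENNReal.ofReal s * (⨆ B, Rmax B δ)
              + ENNReal.ofReal (1 - s) * (⨆ B, Rmax B δ') := by
          have := hmix δ hδD δ' hδ'D s hs0 hs1 (fun _ => 1)
          simpa using this
        rw [show ENNReal.ofReal (1 - s) = ENNReal.ofReal u from by rw [hsu]] at h0
        calc (⨆ B, Rmax B (s • δ + (1 - s) • δ'))
            ≤ ENNReal.ofReal s * (⨆ B, Rmax B δ)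
              + ENNReal.ofReal u * (⨆ B, Rmax B δ') := h0
          _ ≤ ENNReal.ofReal s * ((Atil + ε') * t)
              + ENNReal.ofReal u * (⨆ B, Rmax B δ') :=
              add_le_add_left (mul_le_mul_right hhδ _) _
          _ = ENNReal.ofReal s * (Atil * t)
              + (ENNReal.ofReal s * (ε' * t) + ENNReal.ofReal u * (⨆ B, Rmax B δ')) := by
              rw [add_mul, mul_add, add_assoc]
          _ ≤ ENNReal.ofReal s * (Atil * t)
              + (ENNReal.ofReal u * Δ + ENNReal.ofReal u * (⨆ B, Rmax B δ')) :=
              add_le_add_right (add_le_add_left hkey _) _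
          _ = ENNReal.ofReal s * Rtil + ENNReal.ofReal u * Rtil := by
              rw [← mul_add, tsub_add_cancel_of_le hδ'.le, mul_comm Atil t, ← hRtil]
          _ = Rtil := by
              rw [← add_mul, ← ENNReal.ofReal_add hs0 hu0.le,
                (by ring : s + u = 1), ENNReal.ofReal_one, one_mul]
      have hval : (⨆ B, Rmax B (s • δ + (1 - s) • δ') / Rstar B) ≤ Atil + ε := by
        calc (⨆ B, Rmax B (s • δ + (1 - s) • δ') / Rstar B)
            ≤ ENNReal.ofReal s * (⨆ B, Rmax B δ / Rstar B)
              + ENNReal.ofReal (1 - s) * (⨆ B, Rmax B δ' / Rstar B) :=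
              hmix δ hδD δ' hδ'D s hs0 hs1 Rstar
          _ ≤ (Atil + ε') + (ε : ℝ≥0∞) / 2 := by
              rw [hsu]
              exact add_le_add
                ((mul_le_of_le_one_left zero_le
                  (ENNReal.ofReal_le_one.mpr hs1)).trans hgδ) hsmall
          _ ≤ (Atil + (ε : ℝ≥0∞) / 2) + (ε : ℝ≥0∞) / 2 :=
              add_le_add_left (add_le_add_right (min_le_right _ _) _) _
          _ = Atil + ε := by rw [add_assoc, ENNReal.add_halves]
      exact (iInf₂_le _ ⟨hmem, hfeas_s⟩).trans hval
  have part1 : (⨅ δ ∈ {δ ∈ D | (⨆ B, Rmax B δ) ≤ Rtil}, ⨆ B, Rmax B δ / Rstar B)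
      = Atil :=
    le_antisymm claimB (le_iInf₂ fun δ hδ => claimA δ hδ.1 hδ.2)
  refine ⟨part1, fun δ₀ hδ₀ heq => ?_⟩
  have hfeas : (⨆ B, Rmax B δ₀) ≤ Rtil := by
    have h1 : (⨆ B, Rmax B δ₀) / t ≤ Atil := heq ▸ hht_le_f δ₀
    rcases eq_or_ne t ∞ with rfl | htne
    · rw [hRtil, ENNReal.top_mul hA0]; exact le_top
    · rw [hRtil, mul_comm]
      exact (ENNReal.div_le_iff ht.ne' htne).mp h1
  exact ⟨hfeas, part1 ▸ le_antisymm (heq ▸ hg_le_f δ₀) (claimA δ₀ hδ₀ hfeas)⟩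
end

section
/- There exists a constant C > 0 such that for all λ > C and all μ ∈ ℝ, both the soft-thresholding risk r_S(λ, μ) and the hard-thresholding risk r_H(λ, μ) are bounded above by r̄(λ, μ), where r̄(λ, μ) = min{λ·exp(−λ²/2) + 1.2·μ², 1 + μ²} when |μ| ≤ λ, and r̄(λ, μ) = 1 + λ² when |μ| > λ. -/
open MeasureTheory ProbabilityTheory
open scoped ENNReal

/-- Gaussian shift risk: `r(δ, μ) = E_{T ~ N(μ,1)}[(δ(T) − μ)²]`, valued in `[0,∞]`. -/
noncomputable def gShiftRisk (δ : ℝ → ℝ) (μ : ℝ) : ℝ≥0∞ :=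
  ∫⁻ t, ENNReal.ofReal ((δ t - μ) ^ 2) ∂(gaussianReal μ 1)

/-- Soft-thresholding estimator `δ_{S,λ}(t) = sign(t)·max{|t| − λ, 0}`. -/
noncomputable def softThresh (l t : ℝ) : ℝ := Real.sign t * max (|t| - l) 0

/-- Hard-thresholding estimator `δ_{H,λ}(t) = t·1{|t| > λ}`. -/
noncomputable def hardThresh (l t : ℝ) : ℝ := if l < |t| then t else 0

/-- The bounding function `r̄(λ, μ)`: equal to
`min{λ·exp(−λ²/2) + 1.2·μ², 1 + μ²}` when `|μ| ≤ λ` and to `1 + λ²` when `|μ| > λ`. -/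
noncomputable def rbar (l μ : ℝ) : ℝ :=
  if |μ| ≤ l then min (l * Real.exp (-(l ^ 2) / 2) + 1.2 * μ ^ 2) (1 + μ ^ 2)
  else 1 + l ^ 2

open Set Filter

namespace Stmt11Aux


noncomputable def phi (x : ℝ) : ℝ := (Real.sqrt (2 * Real.pi))⁻¹ * Real.exp (-x ^ 2 / 2)

lemma phi_pos (x : ℝ) : 0 < phi x := by
  unfold phi
  positivity

lemma phi_nonneg (x : ℝ) : 0 ≤ phi x := (phi_pos x).le

lemma phi_even (x : ℝ) : phi (-x) = phi x := by simp [phi]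

lemma continuous_phi : Continuous phi := by
  unfold phi
  fun_prop

lemma phi_eq (x : ℝ) : phi x = (Real.sqrt (2 * Real.pi))⁻¹ * Real.exp (-(2⁻¹) * x ^ 2) := by
  unfold phi; ring_nf

lemma integrable_phi : Integrable phi := by
  simp only [funext phi_eq]
  exact (integrable_exp_neg_mul_sq (by norm_num)).const_mul _

lemma integral_phi : ∫ x, phi x = 1 := by
  simp only [funext phi_eq]
  rw [integral_const_mul, integral_gaussian]
  rw [← Real.sqrt_inv, ← Real.sqrt_mul (by positivity)]
  rw [show (2 * Real.pi)⁻¹ * (Real.pi / 2⁻¹) = 1 by field_simp]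
  simp

lemma pdf_eq (μ t : ℝ) : gaussianPDFReal μ 1 t = phi (t - μ) := by
  simp [gaussianPDFReal, phi]

lemma integrable_sq_mul_phi : Integrable (fun x : ℝ => x ^ 2 * phi x) := by
  have h : ∀ x : ℝ, ‖x ^ 2 * phi x‖ ≤ (Real.sqrt (2 * Real.pi))⁻¹ * 4 * Real.exp (-(4⁻¹) * x ^ 2) := by
    intro x
    rw [Real.norm_eq_abs, abs_of_nonneg (mul_nonneg (sq_nonneg x) (phi_nonneg x))]
    rw [phi_eq]
    have h1 : x ^ 2 ≤ 4 * Real.exp (4⁻¹ * x ^ 2) := by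
      have := Real.add_one_le_exp (4⁻¹ * x ^ 2)
      nlinarith [Real.exp_pos (4⁻¹ * x ^ 2)]
    have h2 : Real.exp (-(2⁻¹) * x ^ 2) = Real.exp (-(4⁻¹) * x ^ 2) * Real.exp (-(4⁻¹) * x ^ 2) := by
      rw [← Real.exp_add]; ring_nf
    have h3 : Real.exp (4⁻¹ * x ^ 2) * Real.exp (-(4⁻¹) * x ^ 2) = 1 := by
      rw [← Real.exp_add]; simp
    have hc : (0:ℝ) < (Real.sqrt (2 * Real.pi))⁻¹ := by positivity
    calc x ^ 2 * ((Real.sqrt (2 * Real.pi))⁻¹ * Real.exp (-(2⁻¹) * x ^ 2))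
        ≤ 4 * Real.exp (4⁻¹ * x ^ 2) * ((Real.sqrt (2 * Real.pi))⁻¹ * Real.exp (-(2⁻¹) * x ^ 2)) := by
          apply mul_le_mul_of_nonneg_right h1 (by positivity)
      _ = (Real.sqrt (2 * Real.pi))⁻¹ * 4 * Real.exp (-(4⁻¹) * x ^ 2) := by
          rw [h2]
          rw [show 4 * Real.exp (4⁻¹ * x ^ 2) * ((Real.sqrt (2 * Real.pi))⁻¹ *
            (Real.exp (-(4⁻¹) * x ^ 2) * Real.exp (-(4⁻¹) * x ^ 2)))
            = (Real.sqrt (2 * Real.pi))⁻¹ * 4 * Real.exp (-(4⁻¹) * x ^ 2) *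
              (Real.exp (4⁻¹ * x ^ 2) * Real.exp (-(4⁻¹) * x ^ 2)) by ring, h3, mul_one]
  refine Integrable.mono' (((integrable_exp_neg_mul_sq (by norm_num : (0:ℝ) < 4⁻¹)).const_mul
    ((Real.sqrt (2 * Real.pi))⁻¹ * 4))) ?_ (Filter.Eventually.of_forall h)
  exact ((measurable_id.pow_const 2).mul (continuous_phi.measurable)).aestronglyMeasurable

lemma integrable_mul_phi : Integrable (fun x : ℝ => x * phi x) := by
  have heq : (fun x : ℝ => x * phi x)
      = fun x => (Real.sqrt (2 * Real.pi))⁻¹ * (x * Real.exp (-(2⁻¹) * x ^ 2)) :=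
    funext fun x => by rw [phi_eq]; ring
  rw [heq]
  exact (integrable_mul_exp_neg_mul_sq (by norm_num)).const_mul _

lemma integral_mul_phi : ∫ x, x * phi x = 0 := by
  have h := integral_neg_eq_self (fun x : ℝ => x * phi x) volume
  simp only [neg_mul, phi_even] at h
  have : ∫ x, -(x * phi x) = -∫ x, x * phi x := integral_neg _
  linarith [h, this]

/-! ### Shift and reflection helpers -/

lemma integral_shift {S T : Set ℝ} (hT : MeasurableSet T) (f : ℝ → ℝ) (a : ℝ)
    (h : ∀ t : ℝ, t ∈ S ↔ t - a ∈ T) : ∫ t in S, f (t - a) = ∫ z in T, f z := by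
  have hS : MeasurableSet S := by
    have : S = (fun t : ℝ => t - a) ⁻¹' T := Set.ext h
    rw [this]
    exact (measurable_id.sub_const a) hT
  rw [← integral_indicator hS, ← integral_indicator hT]
  rw [← integral_sub_right_eq_self (T.indicator f) a]
  congr 1
  funext t
  by_cases ht : t ∈ S
  · rw [Set.indicator_of_mem ht, Set.indicator_of_mem ((h t).1 ht)]
  · rw [Set.indicator_of_notMem ht, Set.indicator_of_notMem (fun hc => ht ((h t).2 hc))]

lemma integrableOn_shift {S T : Set ℝ} (hT : MeasurableSet T) {f : ℝ → ℝ} (a : ℝ)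
    (h : ∀ t : ℝ, t ∈ S ↔ t - a ∈ T) (hf : IntegrableOn f T) :
    IntegrableOn (fun t => f (t - a)) S := by
  have hS : MeasurableSet S := by
    have : S = (fun t : ℝ => t - a) ⁻¹' T := Set.ext h
    rw [this]; exact (measurable_id.sub_const a) hT
  rw [← integrable_indicator_iff hS]
  have h1 : Integrable (T.indicator f) := (integrable_indicator_iff hT).2 hf
  have h2 := h1.comp_sub_right a
  refine h2.congr (Filter.Eventually.of_forall fun t => ?_)
  show T.indicator f (t - a) = S.indicator (fun t => f (t - a)) t
  by_cases ht : t ∈ S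
  · rw [Set.indicator_of_mem ((h t).1 ht)]
    exact (Set.indicator_of_mem ht (fun t => f (t - a))).symm
  · rw [Set.indicator_of_notMem (fun hc => ht ((h t).2 hc))]
    exact (Set.indicator_of_notMem ht (fun t => f (t - a))).symm

lemma integral_reflect {S T : Set ℝ} (hT : MeasurableSet T) (f : ℝ → ℝ)
    (h : ∀ t : ℝ, t ∈ S ↔ -t ∈ T) : ∫ t in S, f t = ∫ z in T, f (-z) := by
  have hS : MeasurableSet S := by
    have : S = (fun t : ℝ => -t) ⁻¹' T := Set.ext h
    rw [this]; exact measurable_neg hT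
  rw [← integral_indicator hS, ← integral_indicator hT]
  rw [← integral_neg_eq_self (S.indicator f) volume]
  congr 1
  funext z
  by_cases hz : z ∈ T
  · have hz' : -z ∈ S := (h (-z)).2 (by simpa using hz)
    rw [Set.indicator_of_mem hz, Set.indicator_of_mem hz']
  · have hz' : -z ∉ S := fun hc => hz (by simpa using (h (-z)).1 hc)
    rw [Set.indicator_of_notMem hz, Set.indicator_of_notMem hz']

/-! ### Exponential FTC lemma -/

lemma tendsto_exp_aux (l : ℝ) (hl : 0 < l) :
    Tendsto (fun t : ℝ => -(Real.exp (-(l * t)) * (t ^ 2 / l + 2 * t / l ^ 2 + 2 / l ^ 3)))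
      atTop (nhds 0) := by
  have hcomp : Tendsto (fun t : ℝ => l * t) atTop atTop :=
    Filter.Tendsto.const_mul_atTop hl tendsto_id
  have h2 := (Real.tendsto_pow_mul_exp_neg_atTop_nhds_zero 2).comp hcomp
  have h1 := (Real.tendsto_pow_mul_exp_neg_atTop_nhds_zero 1).comp hcomp
  have h0 := (Real.tendsto_pow_mul_exp_neg_atTop_nhds_zero 0).comp hcomp
  have hsum := ((h2.add (h1.const_mul 2)).add (h0.const_mul 2)).const_mul (-(1 / l ^ 3))
  simp only [mul_zero, add_zero, zero_add, mul_zero] at hsum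
  refine hsum.congr fun t => ?_
  simp only [Function.comp]
  have hl' : l ≠ 0 := hl.ne'
  field_simp

lemma integral_sq_exp (l c : ℝ) (hl : 0 < l) :
    IntegrableOn (fun t => (t - c) ^ 2 * Real.exp (-(l * (t - c)))) (Ioi c) ∧
      ∫ t in Ioi c, (t - c) ^ 2 * Real.exp (-(l * (t - c))) = 2 / l ^ 3 := by
  have key : IntegrableOn (fun t : ℝ => t ^ 2 * Real.exp (-(l * t))) (Ioi (0:ℝ)) ∧
      ∫ t in Ioi (0:ℝ), t ^ 2 * Real.exp (-(l * t)) = 2 / l ^ 3 := by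
    set g : ℝ → ℝ := fun t => -(Real.exp (-(l * t)) * (t ^ 2 / l + 2 * t / l ^ 2 + 2 / l ^ 3)) with hg
    have hderiv : ∀ x ∈ Ici (0:ℝ), HasDerivAt g (x ^ 2 * Real.exp (-(l * x))) x := by
      intro x _
      have he : HasDerivAt (fun t : ℝ => Real.exp (-(l * t))) (Real.exp (-(l * x)) * (-l)) x := by
        have : HasDerivAt (fun t : ℝ => -(l * t)) (-l) x := by
          simpa using ((hasDerivAt_id x).const_mul l).fun_neg
        exact this.exp
      have hp : HasDerivAt (fun t : ℝ => t ^ 2 / l + 2 * t / l ^ 2 + 2 / l ^ 3)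
          (2 * x / l + 2 / l ^ 2) x := by
        have h1 : HasDerivAt (fun t : ℝ => t ^ 2 / l) (2 * x / l) x := by
          simpa [div_eq_mul_inv, mul_comm] using ((hasDerivAt_pow 2 x).div_const l)
        have h2 : HasDerivAt (fun t : ℝ => 2 * t / l ^ 2) (2 / l ^ 2) x := by
          simpa [mul_div_assoc] using ((hasDerivAt_id x).const_mul 2).div_const (l ^ 2)
        simpa using (h1.add h2).add_const (2 / l ^ 3)
      have := (he.mul hp).neg
      refine this.congr_deriv ?_
      have hl' : l ≠ 0 := hl.ne'
      field_simp
      ring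
    have hpos : ∀ x ∈ Ioi (0:ℝ), 0 ≤ x ^ 2 * Real.exp (-(l * x)) := fun x _ => by positivity
    have htend := tendsto_exp_aux l hl
    refine ⟨integrableOn_Ioi_deriv_of_nonneg' hderiv hpos htend, ?_⟩
    rw [integral_Ioi_of_hasDerivAt_of_nonneg' hderiv hpos htend]
    simp [hg]
  have hmem : ∀ t : ℝ, t ∈ Ioi c ↔ t - c ∈ Ioi (0:ℝ) := fun t => by
    simp [Set.mem_Ioi, sub_pos]
  constructor
  · exact integrableOn_shift (S := Ioi c) measurableSet_Ioi
      (f := fun z => z ^ 2 * Real.exp (-(l * z))) c hmem key.1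
  · exact (integral_shift (S := Ioi c) measurableSet_Ioi
      (fun z => z ^ 2 * Real.exp (-(l * z))) c hmem).trans key.2

/-! ### Gaussian tail integrals -/

lemma tendsto_phi : Tendsto phi atTop (nhds 0) := by
  have h1 : Tendsto (fun x : ℝ => x ^ 2 / 2) atTop atTop :=
    (tendsto_pow_atTop (by norm_num)).atTop_div_const (by norm_num)
  have h2 : Tendsto (fun x : ℝ => Real.exp (-(x ^ 2 / 2))) atTop (nhds 0) :=
    Real.tendsto_exp_neg_atTop_nhds_zero.comp h1
  have h3 := h2.const_mul (Real.sqrt (2 * Real.pi))⁻¹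
  rw [mul_zero] at h3
  refine h3.congr fun x => ?_
  rw [phi, neg_div]

lemma tendsto_mul_phi : Tendsto (fun x : ℝ => x * phi x) atTop (nhds 0) := by
  have hbound : Tendsto (fun x : ℝ => (Real.sqrt (2 * Real.pi))⁻¹ * (x * Real.exp (-x)))
      atTop (nhds 0) := by
    have := (Real.tendsto_pow_mul_exp_neg_atTop_nhds_zero 1).const_mul
      (Real.sqrt (2 * Real.pi))⁻¹
    rw [mul_zero] at this
    exact this.congr fun x => by rw [pow_one]
  refine squeeze_zero_norm' ?_ hbound
  filter_upwards [Filter.eventually_ge_atTop (2:ℝ)] with x hx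
  have hx0 : (0:ℝ) ≤ x := by linarith
  rw [Real.norm_eq_abs, abs_of_nonneg (mul_nonneg hx0 (phi_nonneg x))]
  rw [phi]
  have hexp : Real.exp (-x ^ 2 / 2) ≤ Real.exp (-x) := by
    apply Real.exp_le_exp.2; nlinarith
  calc x * ((Real.sqrt (2 * Real.pi))⁻¹ * Real.exp (-x ^ 2 / 2))
      ≤ x * ((Real.sqrt (2 * Real.pi))⁻¹ * Real.exp (-x)) := by
        apply mul_le_mul_of_nonneg_left (mul_le_mul_of_nonneg_left hexp (by positivity)) hx0
    _ = (Real.sqrt (2 * Real.pi))⁻¹ * (x * Real.exp (-x)) := by ring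

lemma hasDerivAt_phi (x : ℝ) : HasDerivAt phi (-x * phi x) x := by
  unfold phi
  have h1 : HasDerivAt (fun t : ℝ => -t ^ 2 / 2) (-x) x := by
    have := ((hasDerivAt_pow 2 x).fun_neg).div_const 2
    exact this.congr_deriv (by ring)
  have := (h1.exp).const_mul (Real.sqrt (2 * Real.pi))⁻¹
  exact this.congr_deriv (by ring)

lemma integral_Ioi_mul_phi (s : ℝ) : ∫ z in Ioi s, z * phi z = phi s := by
  have hderiv : ∀ x ∈ Ici s, HasDerivAt (fun z => -phi z) (x * phi x) x := by
    intro x _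
    simpa using (hasDerivAt_phi x).fun_neg
  have hint : IntegrableOn (fun z : ℝ => z * phi z) (Ioi s) := integrable_mul_phi.integrableOn
  have htend : Tendsto (fun z => -phi z) atTop (nhds 0) := by simpa using tendsto_phi.neg
  rw [integral_Ioi_of_hasDerivAt_of_tendsto' hderiv hint htend]
  ring

lemma integral_Ioi_sq_sub_one_phi (s : ℝ) :
    ∫ z in Ioi s, (z ^ 2 - 1) * phi z = s * phi s := by
  have hderiv : ∀ x ∈ Ici s, HasDerivAt (fun z => -(z * phi z)) ((x ^ 2 - 1) * phi x) x := by
    intro x _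
    have := ((hasDerivAt_id x).mul (hasDerivAt_phi x)).neg
    refine this.congr_deriv ?_
    simp only [id_eq, one_mul]
    ring
  have hint : IntegrableOn (fun z : ℝ => (z ^ 2 - 1) * phi z) (Ioi s) := by
    have : Integrable (fun z : ℝ => (z ^ 2 - 1) * phi z) := by
      have := integrable_sq_mul_phi.sub integrable_phi
      refine this.congr (Filter.Eventually.of_forall fun z => by
        simp only [Pi.sub_apply]; ring)
    exact this.integrableOn
  have htend : Tendsto (fun z => -(z * phi z)) atTop (nhds 0) := by simpa using tendsto_mul_phi.neg
  rw [integral_Ioi_of_hasDerivAt_of_tendsto' hderiv hint htend]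
  ring

lemma integral_Ioi_sq_phi (s : ℝ) :
    ∫ z in Ioi s, z ^ 2 * phi z = s * phi s + ∫ z in Ioi s, phi z := by
  have h := integral_Ioi_sq_sub_one_phi s
  have hsub : ∫ z in Ioi s, (z ^ 2 - 1) * phi z
      = (∫ z in Ioi s, z ^ 2 * phi z) - ∫ z in Ioi s, phi z := by
    rw [← integral_sub integrable_sq_mul_phi.integrableOn integrable_phi.integrableOn]
    congr 1; funext z; ring
  rw [hsub] at h
  linarith

lemma integral_Iio_phi_zero : ∫ z in Iio (0:ℝ), phi z = ∫ z in Ioi (0:ℝ), phi z := by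
  rw [integral_reflect (T := Ioi (0:ℝ)) measurableSet_Ioi phi
    (fun t => by simp [Set.mem_Iio, Set.mem_Ioi, neg_pos])]
  simp only [phi_even]

lemma integral_Ioi_phi_zero : ∫ z in Ioi (0:ℝ), phi z = 1 / 2 := by
  have h := intervalIntegral.integral_Iio_add_Ici (b := (0:ℝ)) integrable_phi.integrableOn
    integrable_phi.integrableOn
  rw [integral_Iio_phi_zero, integral_phi,
    setIntegral_congr_set (Ioi_ae_eq_Ici (a := (0:ℝ))).symm] at h
  linarith

lemma integral_Iic_phi_zero : ∫ z in Iic (0:ℝ), phi z = 1 / 2 := by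
  rw [← setIntegral_congr_set (Iio_ae_eq_Iic), integral_Iio_phi_zero, integral_Ioi_phi_zero]

lemma integral_Ioi_sq_phi_zero : ∫ z in Ioi (0:ℝ), z ^ 2 * phi z = 1 / 2 := by
  rw [integral_Ioi_sq_phi, integral_Ioi_phi_zero]
  ring

/-! ### Moment integrals -/

lemma integral_sq_phi_total : ∫ z : ℝ, z ^ 2 * phi z = 1 := by
  have h := intervalIntegral.integral_Iio_add_Ici (b := (0:ℝ))
    integrable_sq_mul_phi.integrableOn integrable_sq_mul_phi.integrableOn
  have hrefl : ∫ z in Iio (0:ℝ), z ^ 2 * phi z = ∫ z in Ioi (0:ℝ), z ^ 2 * phi z := by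
    rw [integral_reflect (T := Ioi (0:ℝ)) measurableSet_Ioi (fun z => z ^ 2 * phi z)
      (fun t => by simp [Set.mem_Iio, Set.mem_Ioi, neg_pos])]
    simp only [phi_even, neg_sq]
  rw [hrefl, setIntegral_congr_set (Ioi_ae_eq_Ici (a := (0:ℝ))).symm,
    integral_Ioi_sq_phi_zero] at h
  linarith

lemma integrable_shift_sq (a μ : ℝ) : Integrable (fun t : ℝ => (t - a) ^ 2 * phi (t - μ)) := by
  have hF : Integrable (fun z : ℝ => (z + (μ - a)) ^ 2 * phi z) := by
    have heq : (fun z : ℝ => (z + (μ - a)) ^ 2 * phi z)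
        = fun z => z ^ 2 * phi z + 2 * (μ - a) * (z * phi z) + (μ - a) ^ 2 * phi z :=
      funext fun z => by ring
    rw [heq]
    exact (integrable_sq_mul_phi.add (integrable_mul_phi.const_mul _)).add
      (integrable_phi.const_mul _)
  have h2 := hF.comp_sub_right μ
  refine h2.congr (Filter.Eventually.of_forall fun t => ?_)
  show (t - μ + (μ - a)) ^ 2 * phi (t - μ) = (t - a) ^ 2 * phi (t - μ)
  rw [show t - μ + (μ - a) = t - a by ring]

lemma integral_shift_sq (a μ : ℝ) : ∫ t : ℝ, (t - a) ^ 2 * phi (t - μ) = 1 + (μ - a) ^ 2 := by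
  have h1 : (fun t : ℝ => (t - a) ^ 2 * phi (t - μ))
      = fun t => (t - μ + (μ - a)) ^ 2 * phi (t - μ) :=
    funext fun t => by rw [show t - μ + (μ - a) = t - a by ring]
  rw [h1, integral_sub_right_eq_self (fun z => (z + (μ - a)) ^ 2 * phi z) μ]
  have h2 : (fun z : ℝ => (z + (μ - a)) ^ 2 * phi z)
      = fun z => z ^ 2 * phi z + 2 * (μ - a) * (z * phi z) + (μ - a) ^ 2 * phi z :=
    funext fun z => by ring
  rw [h2]
  have hI1 : Integrable (fun z : ℝ => z ^ 2 * phi z + 2 * (μ - a) * (z * phi z)) :=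
    integrable_sq_mul_phi.add (integrable_mul_phi.const_mul _)
  have hI2 : Integrable (fun z : ℝ => (μ - a) ^ 2 * phi z) := integrable_phi.const_mul _
  rw [integral_add hI1 hI2, integral_add integrable_sq_mul_phi
    (integrable_mul_phi.const_mul _), integral_const_mul, integral_const_mul,
    integral_mul_phi, integral_phi, integral_sq_phi_total]
  ring

lemma integrable_phi_shift (μ : ℝ) : Integrable (fun t : ℝ => phi (t - μ)) :=
  integrable_phi.comp_sub_right μ

lemma integral_phi_shift (μ : ℝ) : ∫ t : ℝ, phi (t - μ) = 1 := by
  rw [integral_sub_right_eq_self phi μ, integral_phi]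

/-! ### Half-line shifted integrals -/

lemma integral_Iic_phi (c : ℝ) : ∫ t in Iic c, phi (t - c) = 1 / 2 := by
  rw [integral_shift (S := Iic c) (T := Iic (0:ℝ)) measurableSet_Iic phi c
    (fun t => by simp [Set.mem_Iic, sub_nonpos])]
  exact integral_Iic_phi_zero

lemma integral_Ici_phi (c : ℝ) : ∫ t in Ici c, phi (t - c) = 1 / 2 := by
  rw [integral_shift (S := Ici c) (T := Ici (0:ℝ)) measurableSet_Ici phi c
    (fun t => by simp [Set.mem_Ici, sub_nonneg])]
  rw [setIntegral_congr_set (Ioi_ae_eq_Ici (a := (0:ℝ))).symm]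
  exact integral_Ioi_phi_zero

/-! ### Tail bounds -/

lemma phi_tail_le {s : ℝ} (hs : 0 < s) : ∫ z in Ioi s, phi z ≤ phi s / s := by
  have hmono : ∀ z ∈ Ioi s, phi z ≤ z * phi z / s := by
    intro z hz
    have hz' : s < z := hz
    rw [le_div_iff₀ hs]
    have := mul_le_mul_of_nonneg_left hz'.le (phi_nonneg z)
    calc phi z * s ≤ z * phi z := by nlinarith [phi_nonneg z]
      _ = z * phi z := rfl
  have h := setIntegral_mono_on integrable_phi.integrableOn
    ((integrable_mul_phi.div_const s).integrableOn) measurableSet_Ioi hmono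
  rw [integral_div, integral_Ioi_mul_phi] at h
  exact h

lemma H_anti {s s' : ℝ} (h : s ≤ s') :
    ∫ z in Ioi s', z ^ 2 * phi z ≤ ∫ z in Ioi s, z ^ 2 * phi z :=
  setIntegral_mono_set integrable_sq_mul_phi.integrableOn
    (Filter.Eventually.of_forall fun z => mul_nonneg (sq_nonneg _) (phi_nonneg _))
    (HasSubset.Subset.eventuallyLE (Ioi_subset_Ioi h))

lemma H_nonneg (s : ℝ) : 0 ≤ ∫ z in Ioi s, z ^ 2 * phi z :=
  setIntegral_nonneg measurableSet_Ioi fun z _ => mul_nonneg (sq_nonneg _) (phi_nonneg _)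

lemma H_le_half {s : ℝ} (hs : 0 ≤ s) : ∫ z in Ioi s, z ^ 2 * phi z ≤ 1 / 2 := by
  calc ∫ z in Ioi s, z ^ 2 * phi z ≤ ∫ z in Ioi (0:ℝ), z ^ 2 * phi z := H_anti hs
    _ = 1 / 2 := integral_Ioi_sq_phi_zero

lemma H_le {s : ℝ} (hs : 0 < s) :
    ∫ z in Ioi s, z ^ 2 * phi z ≤ (s + 1 / s) * phi s := by
  rw [integral_Ioi_sq_phi]
  have h := phi_tail_le hs
  have : (s + 1 / s) * phi s = s * phi s + phi s / s := by
    field_simp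
  rw [this]
  linarith

lemma K_le {l : ℝ} (hl : 0 < l) :
    ∫ z in Ioi l, (z - l) ^ 2 * phi z ≤ phi l * (2 / l ^ 3) := by
  have hpt : ∀ z ∈ Ioi l, (z - l) ^ 2 * phi z
      ≤ phi l * ((z - l) ^ 2 * Real.exp (-(l * (z - l)))) := by
    intro z hz
    have hz' : l < z := hz
    have hphi : phi z ≤ phi l * Real.exp (-(l * (z - l))) := by
      unfold phi
      rw [mul_assoc, ← Real.exp_add]
      apply mul_le_mul_of_nonneg_left _ (by positivity)
      apply Real.exp_le_exp.2
      nlinarith [sq_nonneg (z - l)]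
    calc (z - l) ^ 2 * phi z ≤ (z - l) ^ 2 * (phi l * Real.exp (-(l * (z - l)))) :=
          mul_le_mul_of_nonneg_left hphi (sq_nonneg _)
      _ = phi l * ((z - l) ^ 2 * Real.exp (-(l * (z - l)))) := by ring
  have hintL : IntegrableOn (fun z : ℝ => (z - l) ^ 2 * phi z) (Ioi l) := by
    have h0 : Integrable (fun z : ℝ => (z - l) ^ 2 * phi z) := by
      have := integrable_shift_sq l 0
      refine this.congr (Filter.Eventually.of_forall fun z => by simp only [sub_zero])
    exact h0.integrableOn
  have hintR : IntegrableOn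
      (fun z : ℝ => phi l * ((z - l) ^ 2 * Real.exp (-(l * (z - l))))) (Ioi l) :=
    ((integral_sq_exp l l hl).1).const_mul _
  have h := setIntegral_mono_on hintL hintR measurableSet_Ioi hpt
  rw [integral_const_mul, (integral_sq_exp l l hl).2] at h
  exact h

/-! ### Density comparison on half-lines -/

lemma integral_Iic_phi_shift_le {μ l : ℝ} (h : l ≤ μ) :
    ∫ t in Iic l, phi (t - μ) ≤ Real.exp (-(μ - l) ^ 2 / 2) * (1 / 2) := by
  have hpt : ∀ t ∈ Iic l, phi (t - μ) ≤ Real.exp (-(μ - l) ^ 2 / 2) * phi (t - l) := by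
    intro t ht
    have ht' : t ≤ l := ht
    unfold phi
    rw [show Real.exp (-(μ - l) ^ 2 / 2) * ((Real.sqrt (2 * Real.pi))⁻¹
        * Real.exp (-(t - l) ^ 2 / 2)) = (Real.sqrt (2 * Real.pi))⁻¹
        * (Real.exp (-(μ - l) ^ 2 / 2) * Real.exp (-(t - l) ^ 2 / 2)) by ring, ← Real.exp_add]
    apply mul_le_mul_of_nonneg_left _ (by positivity)
    apply Real.exp_le_exp.2
    nlinarith [mul_nonneg (sub_nonneg.2 ht') (sub_nonneg.2 h)]
  have hmono := setIntegral_mono_on (integrable_phi_shift μ).integrableOn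
    (((integrable_phi_shift l).const_mul _).integrableOn) measurableSet_Iic hpt
  rw [integral_const_mul, integral_Iic_phi l] at hmono
  exact hmono

lemma integral_Ici_phi_shift_le {μ l : ℝ} (h : μ ≤ -l) :
    ∫ t in Ici (-l), phi (t - μ) ≤ Real.exp (-(-l - μ) ^ 2 / 2) * (1 / 2) := by
  have hpt : ∀ t ∈ Ici (-l), phi (t - μ) ≤ Real.exp (-(-l - μ) ^ 2 / 2) * phi (t - (-l)) := by
    intro t ht
    have ht' : -l ≤ t := ht
    unfold phi
    rw [show Real.exp (-(-l - μ) ^ 2 / 2) * ((Real.sqrt (2 * Real.pi))⁻¹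
        * Real.exp (-(t - (-l)) ^ 2 / 2)) = (Real.sqrt (2 * Real.pi))⁻¹
        * (Real.exp (-(-l - μ) ^ 2 / 2) * Real.exp (-(t - (-l)) ^ 2 / 2)) by ring, ← Real.exp_add]
    apply mul_le_mul_of_nonneg_left _ (by positivity)
    apply Real.exp_le_exp.2
    nlinarith [mul_nonneg (sub_nonneg.2 ht') (sub_nonneg.2 h)]
  have hmono := setIntegral_mono_on (integrable_phi_shift μ).integrableOn
    (((integrable_phi_shift (-l)).const_mul _).integrableOn) measurableSet_Ici hpt
  rw [integral_const_mul, integral_Ici_phi (-l)] at hmono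
  exact hmono

lemma ofReal_min' (a b : ℝ) :
    ENNReal.ofReal (min a b) = min (ENNReal.ofReal a) (ENNReal.ofReal b) := by
  rcases le_total a b with h | h
  · rw [min_eq_left h, min_eq_left (ENNReal.ofReal_le_ofReal h)]
  · rw [min_eq_right h, min_eq_right (ENNReal.ofReal_le_ofReal h)]


/-! ### Master risk bound -/

lemma risk_le {δ : ℝ → ℝ} {μ : ℝ} {g : ℝ → ℝ}
    (hpt : ∀ t, (δ t - μ) ^ 2 ≤ g t)
    (hint : Integrable (fun t => g t * phi (t - μ))) :
    gShiftRisk δ μ ≤ ENNReal.ofReal (∫ t, g t * phi (t - μ)) := by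
  have hfin : ∀ᵐ x : ℝ, gaussianPDF μ 1 x < ⊤ :=
    Filter.Eventually.of_forall fun x => ENNReal.ofReal_lt_top
  rw [gShiftRisk, gaussianReal_of_var_ne_zero _ one_ne_zero,
    lintegral_withDensity_eq_lintegral_mul_non_measurable _ (measurable_gaussianPDF μ 1) hfin]
  have hnn : 0 ≤ᵐ[(volume : Measure ℝ)] fun t => g t * phi (t - μ) :=
    Filter.Eventually.of_forall fun t => mul_nonneg ((sq_nonneg _).trans (hpt t)) (phi_nonneg _)
  calc ∫⁻ a, (gaussianPDF μ 1 * fun t => ENNReal.ofReal ((δ t - μ) ^ 2)) a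
      ≤ ∫⁻ a, ENNReal.ofReal (g a * phi (a - μ)) := by
        apply lintegral_mono
        intro t
        simp only [Pi.mul_apply]
        rw [gaussianPDF, ← ENNReal.ofReal_mul (gaussianPDFReal_nonneg μ 1 t)]
        apply ENNReal.ofReal_le_ofReal
        rw [pdf_eq]
        calc phi (t - μ) * (δ t - μ) ^ 2 ≤ phi (t - μ) * g t :=
              mul_le_mul_of_nonneg_left (hpt t) (phi_nonneg _)
          _ = g t * phi (t - μ) := mul_comm _ _
    _ = ENNReal.ofReal (∫ t, g t * phi (t - μ)) :=
        (ofReal_integral_eq_lintegral_ofReal hint hnn).symm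

/-! ### Pointwise estimator bounds -/

lemma sq_between {x t μ : ℝ} (h : t ≤ x ∧ x ≤ 0 ∨ 0 ≤ x ∧ x ≤ t) :
    (x - μ) ^ 2 ≤ (t - μ) ^ 2 + μ ^ 2 := by
  rcases h with ⟨h1, h2⟩ | ⟨h1, h2⟩
  · nlinarith [sq_nonneg (μ + x - t), mul_nonneg (neg_nonneg.2 h2) (sub_nonneg.2 h1)]
  · nlinarith [sq_nonneg (μ + x - t), mul_nonneg h1 (sub_nonneg.2 h2)]

lemma softThresh_of_ge {l t : ℝ} (hl : 0 < l) (h : l ≤ t) : softThresh l t = t - l := by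
  unfold softThresh
  rw [Real.sign_of_pos (lt_of_lt_of_le hl h), abs_of_pos (lt_of_lt_of_le hl h), one_mul,
    max_eq_left (by linarith)]

lemma softThresh_of_le {l t : ℝ} (hl : 0 < l) (h : t ≤ -l) : softThresh l t = t + l := by
  unfold softThresh
  have ht : t < 0 := by linarith
  rw [Real.sign_of_neg ht, abs_of_neg ht, max_eq_left (by linarith)]
  ring

lemma softThresh_of_mid {l t : ℝ} (h1 : -l ≤ t) (h2 : t ≤ l) : softThresh l t = 0 := by
  unfold softThresh
  rw [max_eq_right (by rcases abs_cases t with ⟨h3, _⟩ | ⟨h3, _⟩ <;> linarith), mul_zero]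

lemma softThresh_neg (l t : ℝ) : softThresh l (-t) = -softThresh l t := by
  unfold softThresh
  rw [Real.sign_neg, abs_neg]
  ring

lemma soft_pt1 {l : ℝ} (hl : 0 < l) (μ t : ℝ) :
    (softThresh l t - μ) ^ 2 ≤ (t - μ) ^ 2 + μ ^ 2 := by
  rcases le_total t (-l) with h | h
  · rw [softThresh_of_le hl h]
    exact sq_between (Or.inl ⟨by linarith, by linarith⟩)
  · rcases le_total l t with h2 | h2
    · rw [softThresh_of_ge hl h2]
      exact sq_between (Or.inr ⟨by linarith, by linarith⟩)
    · rw [softThresh_of_mid (by linarith) h2]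
      rcases le_total t 0 with h3 | h3
      · exact sq_between (Or.inl ⟨h3, le_refl 0⟩)
      · exact sq_between (Or.inr ⟨le_refl 0, h3⟩)

lemma hard_pt1 (l μ t : ℝ) : (hardThresh l t - μ) ^ 2 ≤ (t - μ) ^ 2 + μ ^ 2 := by
  unfold hardThresh
  split_ifs with h
  · nlinarith [sq_nonneg μ]
  · nlinarith [sq_nonneg (t - μ)]

/-! ### The `g` functions for the case `|μ| ≤ l` -/

noncomputable def gS (l μ t : ℝ) : ℝ :=
  μ ^ 2 + (Ioi (l + μ)).indicator (fun t => (t - μ - l) ^ 2) t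
    + (Iio (μ - l)).indicator (fun t => (t - μ + l) ^ 2) t

noncomputable def gH (l μ t : ℝ) : ℝ :=
  μ ^ 2 + (Ioi l).indicator (fun t => (t - μ) ^ 2) t
    + (Iio (-l)).indicator (fun t => (t - μ) ^ 2) t

lemma soft_pt2 {l : ℝ} (hl : 0 < l) (μ t : ℝ) : (softThresh l t - μ) ^ 2 ≤ gS l μ t := by
  have hnn1 : 0 ≤ (Ioi (l + μ)).indicator (fun t => (t - μ - l) ^ 2) t :=
    Set.indicator_nonneg (fun x _ => sq_nonneg _) t
  have hnn2 : 0 ≤ (Iio (μ - l)).indicator (fun t => (t - μ + l) ^ 2) t :=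
    Set.indicator_nonneg (fun x _ => sq_nonneg _) t
  unfold gS
  rcases le_total t (-l) with h | h
  · rw [softThresh_of_le hl h]
    rcases lt_or_ge t (μ - l) with h2 | h2
    · rw [Set.indicator_of_mem (Set.mem_Iio.2 h2)]
      nlinarith
    · -- μ - l ≤ t ≤ -l hence 0 ≤ t + l - μ ≤ -μ, so (t + l - μ)² ≤ μ²
      nlinarith
  · rcases le_total l t with h2 | h2
    · rw [softThresh_of_ge hl h2]
      rcases lt_or_ge (l + μ) t with h3 | h3
      · rw [Set.indicator_of_mem (Set.mem_Ioi.2 h3)]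
        nlinarith
      · nlinarith
    · rw [softThresh_of_mid (by linarith) h2]
      nlinarith

lemma hard_pt2 {l : ℝ} (μ t : ℝ) : (hardThresh l t - μ) ^ 2 ≤ gH l μ t := by
  have hnn1 : 0 ≤ (Ioi l).indicator (fun t => (t - μ) ^ 2) t :=
    Set.indicator_nonneg (fun x _ => sq_nonneg _) t
  have hnn2 : 0 ≤ (Iio (-l)).indicator (fun t => (t - μ) ^ 2) t :=
    Set.indicator_nonneg (fun x _ => sq_nonneg _) t
  unfold hardThresh gH
  split_ifs with h
  · rcases abs_cases t with ⟨habs, _⟩ | ⟨habs, _⟩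
    · rw [Set.indicator_of_mem (Set.mem_Ioi.2 (by linarith : l < t))]
      nlinarith
    · rw [Set.indicator_of_mem (Set.mem_Iio.2 (by linarith : t < -l))]
      nlinarith
  · nlinarith [sq_nonneg (t - μ)]

lemma gS_int {l μ : ℝ} (hl : 0 < l) :
    Integrable (fun t => gS l μ t * phi (t - μ)) ∧
    ∫ t, gS l μ t * phi (t - μ) ≤ μ ^ 2 + 2 * (phi l * (2 / l ^ 3)) := by
  have hmem1 : ∀ t : ℝ, t ∈ Ioi (l + μ) ↔ t - μ ∈ Ioi l := fun t => by
    simp only [Set.mem_Ioi]; constructor <;> intro <;> linarith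
  have hmem2 : ∀ t : ℝ, t ∈ Iio (μ - l) ↔ t - μ ∈ Iio (-l) := fun t => by
    simp only [Set.mem_Iio]; constructor <;> intro <;> linarith
  have heq : (fun t => gS l μ t * phi (t - μ))
      = fun t => μ ^ 2 * phi (t - μ)
        + ((Ioi (l + μ)).indicator (fun t => (t - μ - l) ^ 2 * phi (t - μ)) t
          + (Iio (μ - l)).indicator (fun t => (t - μ + l) ^ 2 * phi (t - μ)) t) := by
    funext t
    unfold gS
    by_cases h1 : t ∈ Ioi (l + μ) <;> by_cases h2 : t ∈ Iio (μ - l) <;>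
      simp only [Set.indicator_of_mem, Set.indicator_of_notMem, h1, h2, if_true, if_false,
        Set.indicator_apply] <;> ring
  have hI1 : Integrable (fun t : ℝ => μ ^ 2 * phi (t - μ)) := (integrable_phi_shift μ).const_mul _
  have hI2 : Integrable ((Ioi (l + μ)).indicator (fun t => (t - μ - l) ^ 2 * phi (t - μ))) := by
    rw [integrable_indicator_iff measurableSet_Ioi]
    refine (Integrable.integrableOn ?_)
    have := integrable_shift_sq (μ + l) μ
    refine this.congr (Filter.Eventually.of_forall fun t => ?_)
    show (t - (μ + l)) ^ 2 * phi (t - μ) = (t - μ - l) ^ 2 * phi (t - μ)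
    rw [show t - (μ + l) = t - μ - l by ring]
  have hI3 : Integrable ((Iio (μ - l)).indicator (fun t => (t - μ + l) ^ 2 * phi (t - μ))) := by
    rw [integrable_indicator_iff measurableSet_Iio]
    refine (Integrable.integrableOn ?_)
    have := integrable_shift_sq (μ - l) μ
    refine this.congr (Filter.Eventually.of_forall fun t => ?_)
    show (t - (μ - l)) ^ 2 * phi (t - μ) = (t - μ + l) ^ 2 * phi (t - μ)
    rw [show t - (μ - l) = t - μ + l by ring]
  have hI23 : Integrable (fun t : ℝ => (Ioi (l + μ)).indicator (fun t => (t - μ - l) ^ 2 * phi (t - μ)) t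
      + (Iio (μ - l)).indicator (fun t => (t - μ + l) ^ 2 * phi (t - μ)) t) := hI2.add hI3
  constructor
  · rw [heq]
    exact hI1.add hI23
  · rw [heq, integral_add hI1 hI23, integral_add hI2 hI3, integral_const_mul,
      integral_phi_shift, integral_indicator measurableSet_Ioi,
      integral_indicator measurableSet_Iio]
    have hT1 : ∫ t in Ioi (l + μ), (t - μ - l) ^ 2 * phi (t - μ) ≤ phi l * (2 / l ^ 3) := by
      have hshift := integral_shift (S := Ioi (l + μ)) (T := Ioi l) measurableSet_Ioi
        (fun z => (z - l) ^ 2 * phi z) μ hmem1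
      exact le_of_eq_of_le hshift (K_le hl)
    have hT2 : ∫ t in Iio (μ - l), (t - μ + l) ^ 2 * phi (t - μ) ≤ phi l * (2 / l ^ 3) := by
      have hshift := integral_shift (S := Iio (μ - l)) (T := Iio (-l)) measurableSet_Iio
        (fun z => (z + l) ^ 2 * phi z) μ hmem2
      have h2 : ∫ z in Iio (-l), (z + l) ^ 2 * phi z = ∫ z in Ioi l, (z - l) ^ 2 * phi z := by
        rw [integral_reflect (T := Ioi l) measurableSet_Ioi (fun z => (z + l) ^ 2 * phi z)
          (fun t => by simp only [Set.mem_Iio, Set.mem_Ioi]; constructor <;> intro <;> linarith)]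
        refine setIntegral_congr_fun measurableSet_Ioi fun z _ => ?_
        rw [phi_even]
        ring
      exact le_of_eq_of_le (hshift.trans h2) (K_le hl)
    nlinarith [mul_nonneg (phi_nonneg l) (show (0:ℝ) ≤ 2 / l ^ 3 by positivity)]

lemma gH_int {l μ : ℝ} :
    Integrable (fun t => gH l μ t * phi (t - μ)) ∧
    ∫ t, gH l μ t * phi (t - μ)
      = μ ^ 2 + ((∫ z in Ioi (l - μ), z ^ 2 * phi z) + ∫ z in Ioi (l + μ), z ^ 2 * phi z) := by
  have hmem1 : ∀ t : ℝ, t ∈ Ioi l ↔ t - μ ∈ Ioi (l - μ) := fun t => by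
    simp only [Set.mem_Ioi]; constructor <;> intro <;> linarith
  have hmem2 : ∀ t : ℝ, t ∈ Iio (-l) ↔ t - μ ∈ Iio (-l - μ) := fun t => by
    simp only [Set.mem_Iio]; constructor <;> intro <;> linarith
  have heq : (fun t => gH l μ t * phi (t - μ))
      = fun t => μ ^ 2 * phi (t - μ)
        + ((Ioi l).indicator (fun t => (t - μ) ^ 2 * phi (t - μ)) t
          + (Iio (-l)).indicator (fun t => (t - μ) ^ 2 * phi (t - μ)) t) := by
    funext t
    unfold gH
    by_cases h1 : t ∈ Ioi l <;> by_cases h2 : t ∈ Iio (-l) <;>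
      simp only [Set.indicator_of_mem, Set.indicator_of_notMem, h1, h2, if_true, if_false,
        Set.indicator_apply] <;> ring
  have hI1 : Integrable (fun t : ℝ => μ ^ 2 * phi (t - μ)) := (integrable_phi_shift μ).const_mul _
  have hI2 : Integrable ((Ioi l).indicator (fun t => (t - μ) ^ 2 * phi (t - μ))) := by
    rw [integrable_indicator_iff measurableSet_Ioi]
    exact (integrable_shift_sq μ μ).integrableOn
  have hI3 : Integrable ((Iio (-l)).indicator (fun t => (t - μ) ^ 2 * phi (t - μ))) := by
    rw [integrable_indicator_iff measurableSet_Iio]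
    exact (integrable_shift_sq μ μ).integrableOn
  have hI23 : Integrable (fun t : ℝ => (Ioi l).indicator (fun t => (t - μ) ^ 2 * phi (t - μ)) t
      + (Iio (-l)).indicator (fun t => (t - μ) ^ 2 * phi (t - μ)) t) := hI2.add hI3
  constructor
  · rw [heq]
    exact hI1.add hI23
  · rw [heq, integral_add hI1 hI23, integral_add hI2 hI3, integral_const_mul,
      integral_phi_shift, integral_indicator measurableSet_Ioi,
      integral_indicator measurableSet_Iio]
    have hT1 : ∫ t in Ioi l, (t - μ) ^ 2 * phi (t - μ) = ∫ z in Ioi (l - μ), z ^ 2 * phi z := by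
      exact integral_shift (S := Ioi l) (T := Ioi (l - μ)) measurableSet_Ioi
        (fun z => z ^ 2 * phi z) μ hmem1
    have hT2 : ∫ t in Iio (-l), (t - μ) ^ 2 * phi (t - μ) = ∫ z in Ioi (l + μ), z ^ 2 * phi z := by
      have h1 := integral_shift (S := Iio (-l)) (T := Iio (-l - μ)) measurableSet_Iio
        (fun z => z ^ 2 * phi z) μ hmem2
      have h2 : ∫ z in Iio (-l - μ), z ^ 2 * phi z = ∫ z in Ioi (l + μ), z ^ 2 * phi z := by
        rw [integral_reflect (T := Ioi (l + μ)) measurableSet_Ioi (fun z => z ^ 2 * phi z)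
          (fun t => by simp only [Set.mem_Iio, Set.mem_Ioi]; constructor <;> intro <;> linarith)]
        refine setIntegral_congr_fun measurableSet_Ioi fun z _ => ?_
        rw [phi_even, neg_sq]
      exact h1.trans h2
    rw [hT1, hT2]
    ring

/-! ### The simple bound `1 + μ²` -/

lemma g1_int (μ : ℝ) :
    Integrable (fun t => ((t - μ) ^ 2 + μ ^ 2) * phi (t - μ)) ∧
    ∫ t, ((t - μ) ^ 2 + μ ^ 2) * phi (t - μ) = 1 + μ ^ 2 := by
  have heq : (fun t : ℝ => ((t - μ) ^ 2 + μ ^ 2) * phi (t - μ))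
      = fun t => (t - μ) ^ 2 * phi (t - μ) + μ ^ 2 * phi (t - μ) := funext fun t => by ring
  have hI1 := integrable_shift_sq μ μ
  have hI2 : Integrable (fun t : ℝ => μ ^ 2 * phi (t - μ)) := (integrable_phi_shift μ).const_mul _
  constructor
  · rw [heq]; exact hI1.add hI2
  · rw [heq, integral_add hI1 hI2, integral_const_mul, integral_phi_shift, integral_shift_sq]
    ring

/-! ### Pointwise and integral bounds for the case `|μ| > l` -/

lemma soft_pt3 {l μ : ℝ} (hl : 0 < l) (hμ : l < μ) (t : ℝ) :
    (softThresh l t - μ) ^ 2 ≤ (t - (μ + l)) ^ 2 := by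
  rcases le_total t (-l) with h | h
  · rw [softThresh_of_le hl h]
    nlinarith [mul_pos hl (show (0:ℝ) < μ - t by linarith)]
  · rcases le_total l t with h2 | h2
    · rw [softThresh_of_ge hl h2]
      exact le_of_eq (by ring)
    · rw [softThresh_of_mid (by linarith) h2]
      nlinarith [mul_nonneg (sub_nonneg.2 h2) (show (0:ℝ) ≤ 2 * μ + l - t by linarith)]

lemma soft_pt3' {l μ : ℝ} (hl : 0 < l) (hμ : μ < -l) (t : ℝ) :
    (softThresh l t - μ) ^ 2 ≤ (t - (μ - l)) ^ 2 := by
  have h := soft_pt3 hl (show l < -μ by linarith) (-t)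
  rw [softThresh_neg] at h
  calc (softThresh l t - μ) ^ 2 = (-softThresh l t - -μ) ^ 2 := by ring
    _ ≤ (-t - (-μ + l)) ^ 2 := h
    _ = (t - (μ - l)) ^ 2 := by ring

lemma hard_pt3a (l μ t : ℝ) :
    (hardThresh l t - μ) ^ 2 ≤ (t - μ) ^ 2 + μ ^ 2 * (Iic l).indicator (fun _ => (1:ℝ)) t := by
  have hnn : 0 ≤ μ ^ 2 * (Iic l).indicator (fun _ => (1:ℝ)) t :=
    mul_nonneg (sq_nonneg μ) (Set.indicator_nonneg (fun _ _ => zero_le_one) t)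
  unfold hardThresh
  split_ifs with h
  · linarith [sq_nonneg (t - μ)]
  · push_neg at h
    have ht : t ≤ l := le_trans (le_abs_self t) h
    rw [Set.indicator_of_mem (Set.mem_Iic.2 ht), mul_one]
    nlinarith [sq_nonneg (t - μ)]

lemma hard_pt3b (l μ t : ℝ) :
    (hardThresh l t - μ) ^ 2 ≤ (t - μ) ^ 2 + μ ^ 2 * (Ici (-l)).indicator (fun _ => (1:ℝ)) t := by
  have hnn : 0 ≤ μ ^ 2 * (Ici (-l)).indicator (fun _ => (1:ℝ)) t :=
    mul_nonneg (sq_nonneg μ) (Set.indicator_nonneg (fun _ _ => zero_le_one) t)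
  unfold hardThresh
  split_ifs with h
  · linarith [sq_nonneg (t - μ)]
  · push_neg at h
    have ht : -l ≤ t := le_trans (neg_le_neg h) (neg_abs_le t)
    rw [Set.indicator_of_mem (Set.mem_Ici.2 ht), mul_one]
    nlinarith [sq_nonneg (t - μ)]

lemma gB_int_a {l μ : ℝ} (h : l ≤ μ) :
    Integrable (fun t => ((t - μ) ^ 2 + μ ^ 2 * (Iic l).indicator (fun _ => (1:ℝ)) t)
        * phi (t - μ)) ∧
    ∫ t, ((t - μ) ^ 2 + μ ^ 2 * (Iic l).indicator (fun _ => (1:ℝ)) t) * phi (t - μ)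
      ≤ 1 + μ ^ 2 * (Real.exp (-(μ - l) ^ 2 / 2) * (1 / 2)) := by
  have heq : (fun t : ℝ => ((t - μ) ^ 2 + μ ^ 2 * (Iic l).indicator (fun _ => (1:ℝ)) t)
        * phi (t - μ))
      = fun t => (t - μ) ^ 2 * phi (t - μ)
        + μ ^ 2 * (Iic l).indicator (fun t => phi (t - μ)) t := by
    funext t
    by_cases ht : t ∈ Iic l <;>
      simp only [Set.indicator_of_mem, Set.indicator_of_notMem, ht, not_false_iff,
        Set.indicator_apply, if_true, if_false] <;> ring
  have hI1 := integrable_shift_sq μ μ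
  have hI2 : Integrable (fun t : ℝ => μ ^ 2 * (Iic l).indicator (fun t => phi (t - μ)) t) :=
    ((integrable_phi_shift μ).indicator measurableSet_Iic).const_mul _
  constructor
  · rw [heq]; exact hI1.add hI2
  · rw [heq, integral_add hI1 hI2, integral_const_mul, integral_indicator measurableSet_Iic,
      integral_shift_sq]
    have hle := integral_Iic_phi_shift_le h
    have h2 : μ ^ 2 * ∫ t in Iic l, phi (t - μ) ≤ μ ^ 2 * (Real.exp (-(μ - l) ^ 2 / 2) * (1 / 2)) :=
      mul_le_mul_of_nonneg_left hle (sq_nonneg μ)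
    nlinarith [h2]

lemma gB_int_b {l μ : ℝ} (h : μ ≤ -l) :
    Integrable (fun t => ((t - μ) ^ 2 + μ ^ 2 * (Ici (-l)).indicator (fun _ => (1:ℝ)) t)
        * phi (t - μ)) ∧
    ∫ t, ((t - μ) ^ 2 + μ ^ 2 * (Ici (-l)).indicator (fun _ => (1:ℝ)) t) * phi (t - μ)
      ≤ 1 + μ ^ 2 * (Real.exp (-(-l - μ) ^ 2 / 2) * (1 / 2)) := by
  have heq : (fun t : ℝ => ((t - μ) ^ 2 + μ ^ 2 * (Ici (-l)).indicator (fun _ => (1:ℝ)) t)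
        * phi (t - μ))
      = fun t => (t - μ) ^ 2 * phi (t - μ)
        + μ ^ 2 * (Ici (-l)).indicator (fun t => phi (t - μ)) t := by
    funext t
    by_cases ht : t ∈ Ici (-l) <;>
      simp only [Set.indicator_of_mem, Set.indicator_of_notMem, ht, not_false_iff,
        Set.indicator_apply, if_true, if_false] <;> ring
  have hI1 := integrable_shift_sq μ μ
  have hI2 : Integrable (fun t : ℝ => μ ^ 2 * (Ici (-l)).indicator (fun t => phi (t - μ)) t) :=
    ((integrable_phi_shift μ).indicator measurableSet_Ici).const_mul _
  constructor
  · rw [heq]; exact hI1.add hI2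
  · rw [heq, integral_add hI1 hI2, integral_const_mul, integral_indicator measurableSet_Ici,
      integral_shift_sq]
    have hle := integral_Ici_phi_shift_le h
    have h2 : μ ^ 2 * ∫ t in Ici (-l), phi (t - μ)
        ≤ μ ^ 2 * (Real.exp (-(-l - μ) ^ 2 / 2) * (1 / 2)) :=
      mul_le_mul_of_nonneg_left hle (sq_nonneg μ)
    nlinarith [h2]

/-! ### Arithmetic lemmas -/

lemma sqrt_two_pi_ge : (5 / 2 : ℝ) ≤ Real.sqrt (2 * Real.pi) := by
  rw [show (5 / 2 : ℝ) = Real.sqrt ((5 / 2) ^ 2) from (Real.sqrt_sq (by norm_num)).symm]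
  apply Real.sqrt_le_sqrt
  nlinarith [Real.pi_gt_d6]

lemma phi_le (x : ℝ) : phi x ≤ 2 / 5 * Real.exp (-x ^ 2 / 2) := by
  unfold phi
  apply mul_le_mul_of_nonneg_right _ (Real.exp_nonneg _)
  calc (Real.sqrt (2 * Real.pi))⁻¹ ≤ (5 / 2 : ℝ)⁻¹ := by
        apply inv_anti₀ (by norm_num) sqrt_two_pi_ge
    _ = 2 / 5 := by norm_num

lemma exp_quarter {x : ℝ} (hx : 0 ≤ x) : x ^ 4 / 256 ≤ Real.exp x := by
  have h1 : x / 4 ≤ Real.exp (x / 4) := by linarith [Real.add_one_le_exp (x / 4)]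
  have h2 : (x / 4) ^ 4 ≤ Real.exp (x / 4) ^ 4 := pow_le_pow_left₀ (by positivity) h1 4
  have h3 : Real.exp (x / 4) ^ 4 = Real.exp x := by
    rw [← Real.exp_nat_mul]
    congr 1
    push_cast
    ring
  rw [h3] at h2
  calc x ^ 4 / 256 = (x / 4) ^ 4 := by ring
    _ ≤ Real.exp x := h2

lemma chernoff_bound {l s : ℝ} (hl : 2 ≤ l) (hs : 0 ≤ s) :
    (l + s) ^ 2 * (Real.exp (-s ^ 2 / 2) * (1 / 2)) ≤ l ^ 2 := by
  have h1 : 1 + s ^ 2 / 2 ≤ Real.exp (s ^ 2 / 2) := by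
    linarith [Real.add_one_le_exp (s ^ 2 / 2)]
  have h2 : Real.exp (-s ^ 2 / 2) * Real.exp (s ^ 2 / 2) = 1 := by
    rw [← Real.exp_add, show -s ^ 2 / 2 + s ^ 2 / 2 = 0 by ring, Real.exp_zero]
  have h3 : (l + s) ^ 2 ≤ 2 * l ^ 2 * (1 + s ^ 2 / 2) := by
    nlinarith [sq_nonneg (l - s), mul_nonneg (sq_nonneg s) (show (0:ℝ) ≤ l ^ 2 - 4 by nlinarith)]
  have h4 : (l + s) ^ 2 ≤ 2 * l ^ 2 * Real.exp (s ^ 2 / 2) := by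
    nlinarith [sq_nonneg l]
  calc (l + s) ^ 2 * (Real.exp (-s ^ 2 / 2) * (1 / 2))
      ≤ 2 * l ^ 2 * Real.exp (s ^ 2 / 2) * (Real.exp (-s ^ 2 / 2) * (1 / 2)) := by
        apply mul_le_mul_of_nonneg_right h4 (by positivity)
    _ = l ^ 2 * (Real.exp (-s ^ 2 / 2) * Real.exp (s ^ 2 / 2)) := by ring
    _ = l ^ 2 := by rw [h2, mul_one]

/-! ### The core hard-thresholding estimate -/

set_option maxHeartbeats 2000000 in
lemma hard_core {l m : ℝ} (hl : 20 < l) (hm0 : 0 ≤ m) (hml : m ≤ l) :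
    (∫ z in Ioi (l - m), z ^ 2 * phi z) + ∫ z in Ioi l, z ^ 2 * phi z
      ≤ l * Real.exp (-(l ^ 2) / 2) + 1 / 5 * m ^ 2 := by
  have hl0 : 0 < l := by linarith
  set E := Real.exp (-(l ^ 2) / 2) with hEdef
  have hEpos : 0 < E := Real.exp_pos _
  have hlE : 0 < l * E := mul_pos hl0 hEpos
  -- bound on the fixed tail at `l`
  have hHl : ∫ z in Ioi l, z ^ 2 * phi z ≤ 41 / 100 * (l * E) := by
    have h1 := H_le hl0
    have hinv : 1 / l ≤ l / 400 := by
      rw [div_le_div_iff₀ hl0 (by norm_num)]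
      nlinarith
    have hphil : phi l ≤ 2 / 5 * E := by
      have := phi_le l
      rw [hEdef]
      calc phi l ≤ 2 / 5 * Real.exp (-l ^ 2 / 2) := this
        _ = 2 / 5 * Real.exp (-(l ^ 2) / 2) := by norm_num
    calc ∫ z in Ioi l, z ^ 2 * phi z ≤ (l + 1 / l) * phi l := h1
      _ ≤ (l + l / 400) * (2 / 5 * E) :=
          mul_le_mul (by linarith) hphil (phi_nonneg l) (by positivity)
      _ ≤ 41 / 100 * (l * E) := by nlinarith [hlE]
  have hmain : ∫ z in Ioi (l - m), z ^ 2 * phi z ≤ 59 / 100 * (l * E) + 1 / 5 * m ^ 2 := by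
    rcases le_or_gt 2 m with h2 | h2
    · have hH := H_le_half (show (0:ℝ) ≤ l - m by linarith)
      have : (1:ℝ) / 2 ≤ 1 / 5 * m ^ 2 := by nlinarith
      linarith [hlE]
    · -- m < 2
      have hs : 0 < l - m := by linarith
      have h1 := H_le hs
      have hinv : 1 / (l - m) ≤ 1 := by
        rw [div_le_one hs]; linarith
      have hphi : phi (l - m) ≤ 2 / 5 * (E * Real.exp (l * m)) := by
        have hp := phi_le (l - m)
        have hexp : Real.exp (-(l - m) ^ 2 / 2) ≤ E * Real.exp (l * m) := by
          rw [hEdef, ← Real.exp_add]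
          apply Real.exp_le_exp.2
          nlinarith [sq_nonneg m]
        calc phi (l - m) ≤ 2 / 5 * Real.exp (-(l - m) ^ 2 / 2) := hp
          _ ≤ 2 / 5 * (E * Real.exp (l * m)) := by linarith
      have hH1 : ∫ z in Ioi (l - m), z ^ 2 * phi z
          ≤ (l + 1) * (2 / 5 * (E * Real.exp (l * m))) := by
        calc ∫ z in Ioi (l - m), z ^ 2 * phi z ≤ (l - m + 1 / (l - m)) * phi (l - m) := h1
          _ ≤ (l + 1) * phi (l - m) := by
              apply mul_le_mul_of_nonneg_right _ (phi_nonneg _)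
              linarith
          _ ≤ (l + 1) * (2 / 5 * (E * Real.exp (l * m))) :=
              mul_le_mul_of_nonneg_left hphi (by linarith)
      rcases le_or_gt (l * m) (1 / 4) with h4 | h4
      · -- small l*m : exp(l m) ≤ 4/3
        have hexp : Real.exp (l * m) ≤ 4 / 3 := by
          have ha : 3 / 4 ≤ Real.exp (-(l * m)) := by
            linarith [Real.add_one_le_exp (-(l * m))]
          have hb : Real.exp (l * m) * Real.exp (-(l * m)) = 1 := by
            rw [← Real.exp_add, show l * m + -(l * m) = 0 by ring, Real.exp_zero]
          nlinarith [Real.exp_pos (l * m)]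
        have hfin : (l + 1) * (2 / 5 * (E * Real.exp (l * m))) ≤ 59 / 100 * (l * E) := by
          have hmm : E * Real.exp (l * m) ≤ E * (4 / 3) :=
            mul_le_mul_of_nonneg_left hexp hEpos.le
          nlinarith [mul_le_mul_of_nonneg_left hmm (show (0:ℝ) ≤ l + 1 by linarith), hEpos, hlE]
        nlinarith [hH1, hfin, sq_nonneg m]
      · -- l*m > 1/4
        set A := E * Real.exp (l * m) with hAdef
        have hApos : 0 < A := mul_pos hEpos (Real.exp_pos _)
        have hx0 : (0:ℝ) ≤ l ^ 2 / 2 - 2 * l := by nlinarith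
        have hxq : l ^ 2 / 4 ≤ l ^ 2 / 2 - 2 * l := by nlinarith
        have hexpx : l ^ 8 / 65536 ≤ Real.exp (l ^ 2 / 2 - 2 * l) := by
          have hq := exp_quarter hx0
          have hp : (l ^ 2 / 4) ^ 4 ≤ (l ^ 2 / 2 - 2 * l) ^ 4 :=
            pow_le_pow_left₀ (by positivity) hxq 4
          calc l ^ 8 / 65536 = (l ^ 2 / 4) ^ 4 / 256 := by ring
            _ ≤ (l ^ 2 / 2 - 2 * l) ^ 4 / 256 := by linarith
            _ ≤ Real.exp (l ^ 2 / 2 - 2 * l) := hq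
        have hlm2l : l * m ≤ 2 * l := by
          have := mul_lt_mul_of_pos_left h2 hl0
          linarith
        have hA2l : A ≤ E * Real.exp (2 * l) :=
          mul_le_mul_of_nonneg_left (Real.exp_le_exp.2 hlm2l) hEpos.le
        have hprod : E * Real.exp (2 * l) * Real.exp (l ^ 2 / 2 - 2 * l) = 1 := by
          rw [hEdef, ← Real.exp_add, ← Real.exp_add,
            show -(l ^ 2) / 2 + 2 * l + (l ^ 2 / 2 - 2 * l) = 0 by ring, Real.exp_zero]
        have hA8 : A * (l ^ 8 / 65536) ≤ 1 := by
          calc A * (l ^ 8 / 65536) ≤ A * Real.exp (l ^ 2 / 2 - 2 * l) :=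
                mul_le_mul_of_nonneg_left hexpx hApos.le
            _ ≤ E * Real.exp (2 * l) * Real.exp (l ^ 2 / 2 - 2 * l) :=
                mul_le_mul_of_nonneg_right hA2l (Real.exp_pos _).le
            _ = 1 := hprod
        have hl5 : (3200000:ℝ) ≤ l ^ 5 := by
          calc (3200000:ℝ) = 20 ^ 5 := by norm_num
            _ ≤ l ^ 5 := pow_le_pow_left₀ (by norm_num) hl.le 5
        have hc : 3200000 * l ^ 3 ≤ l ^ 8 := by
          have hm := mul_le_mul_of_nonneg_right hl5 (pow_nonneg hl0.le 3)
          calc 3200000 * l ^ 3 ≤ l ^ 5 * l ^ 3 := hm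
            _ = l ^ 8 := by ring
        have h2l : 2 * l ^ 2 ≤ l ^ 3 := by
          have := mul_nonneg (mul_nonneg hl0.le hl0.le) (show (0:ℝ) ≤ l - 2 by linarith)
          linarith [this]
        have h7 : 2097152 * (l ^ 2 * (l + 1)) ≤ l ^ 8 := by
          have hl3 : (0:ℝ) ≤ l ^ 3 := pow_nonneg hl0.le 3
          linarith [hc, h2l, hl3]
        have h8 : 32 * l ^ 2 * (l + 1) * A * l ^ 8 ≤ l ^ 8 := by
          have h9 : 32 * l ^ 2 * (l + 1) * (A * (l ^ 8 / 65536)) ≤ 32 * l ^ 2 * (l + 1) * 1 :=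
            mul_le_mul_of_nonneg_left hA8 (by positivity)
          linarith [h9, h7]
        have h32 : 32 * l ^ 2 * (l + 1) * A ≤ 1 := by
          by_contra hcon
          push_neg at hcon
          have hq := mul_lt_mul_of_pos_right hcon (pow_pos hl0 8)
          rw [one_mul] at hq
          linarith [h8]
        have hm16 : (1:ℝ) ≤ 16 * l ^ 2 * m ^ 2 := by
          linarith [sq_nonneg (4 * l * m - 1), h4]
        have hkey : (l + 1) * (2 / 5 * A) ≤ 1 / 5 * m ^ 2 := by
          have hmul : (l + 1) * (2 / 5 * A) * (80 * l ^ 2) ≤ 1 / 5 * m ^ 2 * (80 * l ^ 2) := by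
            linarith [h32, hm16]
          exact le_of_mul_le_mul_right hmul (by positivity)
        linarith [hH1, hkey, hlE]
  linarith

end Stmt11Aux

open Stmt11Aux in
/-- **Risk bounds for soft and hard thresholding.**  There is a constant `C > 0` such that
for all thresholds `λ > C` and all means `μ`, both the soft-thresholding risk
`r_S(λ, μ)` and the hard-thresholding risk `r_H(λ, μ)` are bounded above by `r̄(λ, μ)`. -/
theorem stmt_11 :
    ∃ C : ℝ, 0 < C ∧ ∀ l : ℝ, C < l → ∀ μ : ℝ,
      gShiftRisk (softThresh l) μ ≤ ENNReal.ofReal (rbar l μ) ∧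
      gShiftRisk (hardThresh l) μ ≤ ENNReal.ofReal (rbar l μ) := by
  refine ⟨20, by norm_num, fun l hl μ => ?_⟩
  have hl0 : 0 < l := by linarith
  have hl2 : (2:ℝ) ≤ l := by linarith
  by_cases hcase : |μ| ≤ l
  · -- the case |μ| ≤ l
    have hrbar : rbar l μ = min (l * Real.exp (-(l ^ 2) / 2) + 1.2 * μ ^ 2) (1 + μ ^ 2) := by
      unfold rbar
      rw [if_pos hcase]
    rw [hrbar, ofReal_min']
    have hB_soft : gShiftRisk (softThresh l) μ ≤ ENNReal.ofReal (1 + μ ^ 2) := by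
      have hb := g1_int μ
      exact le_trans (risk_le (fun t => soft_pt1 hl0 μ t) hb.1)
        (ENNReal.ofReal_le_ofReal (le_of_eq hb.2))
    have hB_hard : gShiftRisk (hardThresh l) μ ≤ ENNReal.ofReal (1 + μ ^ 2) := by
      have hb := g1_int μ
      exact le_trans (risk_le (fun t => hard_pt1 l μ t) hb.1)
        (ENNReal.ofReal_le_ofReal (le_of_eq hb.2))
    have htail : 2 * (phi l * (2 / l ^ 3)) ≤ l * Real.exp (-(l ^ 2) / 2) := by
      have hp := phi_le l
      have hEpos := Real.exp_pos (-l ^ 2 / 2)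
      have h1 : 2 * (phi l * (2 / l ^ 3)) ≤ 2 * (2 / 5 * Real.exp (-l ^ 2 / 2) * (2 / l ^ 3)) := by
        have := mul_le_mul_of_nonneg_right hp (show (0:ℝ) ≤ 2 / l ^ 3 by positivity)
        linarith
      have h2 : 2 * (2 / 5 * Real.exp (-l ^ 2 / 2) * (2 / l ^ 3))
          ≤ l * Real.exp (-l ^ 2 / 2) := by
        rw [show 2 * (2 / 5 * Real.exp (-l ^ 2 / 2) * (2 / l ^ 3))
          = 8 / 5 * Real.exp (-l ^ 2 / 2) / l ^ 3 by ring, div_le_iff₀ (by positivity : (0:ℝ) < l ^ 3)]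
        have h20 : (20:ℝ) ^ 4 ≤ l ^ 4 := pow_le_pow_left₀ (by norm_num) hl.le 4
        have h3 : (8 / 5 : ℝ) ≤ l ^ 4 := by linarith
        have := mul_nonneg hEpos.le (sub_nonneg.2 h3)
        nlinarith [this, hEpos]
      linarith
    have hA_soft : gShiftRisk (softThresh l) μ
        ≤ ENNReal.ofReal (l * Real.exp (-(l ^ 2) / 2) + 1.2 * μ ^ 2) := by
      have hb := gS_int (μ := μ) hl0
      refine le_trans (risk_le (fun t => soft_pt2 hl0 μ t) hb.1) (ENNReal.ofReal_le_ofReal ?_)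
      refine le_trans hb.2 ?_
      rw [show (1.2:ℝ) = 6 / 5 by norm_num]
      nlinarith [htail, sq_nonneg μ]
    have hA_hard : gShiftRisk (hardThresh l) μ
        ≤ ENNReal.ofReal (l * Real.exp (-(l ^ 2) / 2) + 1.2 * μ ^ 2) := by
      have hb := gH_int (l := l) (μ := μ)
      refine le_trans (risk_le (fun t => hard_pt2 μ t) hb.1) (ENNReal.ofReal_le_ofReal ?_)
      rw [hb.2]
      have hcore := hard_core hl (abs_nonneg μ) hcase
      have hsum : (∫ z in Set.Ioi (l - μ), z ^ 2 * phi z) + ∫ z in Set.Ioi (l + μ), z ^ 2 * phi z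
          ≤ (∫ z in Set.Ioi (l - |μ|), z ^ 2 * phi z) + ∫ z in Set.Ioi l, z ^ 2 * phi z := by
        rcases le_total 0 μ with hm | hm
        · rw [abs_of_nonneg hm]
          exact add_le_add le_rfl (H_anti (by linarith))
        · rw [abs_of_nonpos hm]
          rw [show l - -μ = l + μ by ring]
          have h2 := H_anti (show l ≤ l - μ by linarith)
          linarith
      have hsq : |μ| ^ 2 = μ ^ 2 := sq_abs μ
      rw [hsq] at hcore
      rw [show (1.2:ℝ) = 6 / 5 by norm_num]
      linarith [hsum, hcore]
    exact ⟨le_min hA_soft hB_soft, le_min hA_hard hB_hard⟩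
  · -- the case |μ| > l
    push_neg at hcase
    have hrbar : rbar l μ = 1 + l ^ 2 := by
      unfold rbar
      rw [if_neg (not_le.2 hcase)]
    rw [hrbar]
    rcases lt_abs.1 hcase with hpos | hneg
    · -- l < μ
      constructor
      · have hint := integrable_shift_sq (μ + l) μ
        refine le_trans (risk_le (soft_pt3 hl0 hpos) hint) (ENNReal.ofReal_le_ofReal ?_)
        rw [integral_shift_sq]
        nlinarith [sq_nonneg l]
      · have hb := gB_int_a (le_of_lt hpos)
        refine le_trans (risk_le (fun t => hard_pt3a l μ t) hb.1) (ENNReal.ofReal_le_ofReal ?_)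
        refine le_trans hb.2 ?_
        have hch := chernoff_bound hl2 (show (0:ℝ) ≤ μ - l by linarith)
        nlinarith [hch]
    · -- l < -μ
      have hμ : μ < -l := by linarith
      constructor
      · have hint := integrable_shift_sq (μ - l) μ
        refine le_trans (risk_le (soft_pt3' hl0 hμ) hint) (ENNReal.ofReal_le_ofReal ?_)
        rw [integral_shift_sq]
        nlinarith [sq_nonneg l]
      · have hb := gB_int_b (le_of_lt hμ)
        refine le_trans (risk_le (fun t => hard_pt3b l μ t) hb.1) (ENNReal.ofReal_le_ofReal ?_)
        refine le_trans hb.2 ?_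
        have hch := chernoff_bound hl2 (show (0:ℝ) ≤ -l - μ by linarith)
        nlinarith [hch]
end

section
/- In the bivariate Gaussian model, for any measurable function δ: ℝ → ℝ, the squared-error risk of the estimator δ*(Y_U, T_O) = ρ·√Σ_U·δ(T_O) + Y_U − ρ·√Σ_U·T_O as an estimator of θ equals ρ²·Σ_U·r(δ, b/√Σ_O) + Σ_U − ρ²·Σ_U, i.e. E[(δ*(Y_U, T_O) − θ)²] = ρ²·Σ_U·r(δ, b/√Σ_O) + (1 − ρ²)·Σ_U. -/
open MeasureTheory ProbabilityTheory
open scoped ENNReal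

section RiskAux
open Real Filter Topology

lemma exp_cocompact : Tendsto (fun x : ℝ => rexp (-(1/2) * x^2)) (cocompact ℝ) (𝓝 0) := by
  simpa using tendsto_rpow_abs_mul_exp_neg_mul_sq_cocompact one_half_pos 0

lemma abs_exp_cocompact : Tendsto (fun x : ℝ => |x| * rexp (-(1/2) * x^2)) (cocompact ℝ) (𝓝 0) := by
  simpa using tendsto_rpow_abs_mul_exp_neg_mul_sq_cocompact one_half_pos 1

lemma I0 : ∫ x : ℝ, rexp (-(1/2) * x^2) = √(2*Real.pi) := by
  rw [integral_gaussian]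
  congr 1
  ring

lemma I1 : ∫ x : ℝ, x * rexp (-(1/2) * x^2) = 0 := by
  have hderiv : ∀ x : ℝ, HasDerivAt (fun x : ℝ => -rexp (-(1/2) * x^2))
      (x * rexp (-(1/2) * x^2)) x := by
    intro x
    have h1 : HasDerivAt (fun x : ℝ => -(1/2) * x^2) (-(1/2) * (2 * x^1)) x :=
      (hasDerivAt_pow 2 x).const_mul _
    have : HasDerivAt (fun x : ℝ => -rexp (-(1/2) * x^2))
        (-(rexp (-(1/2) * x^2) * (-(1/2) * (2 * x^1)))) x := (h1.exp).neg
    convert this using 1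
    ring
  have hb : Tendsto (fun x : ℝ => -rexp (-(1/2) * x^2)) atBot (𝓝 0) := by
    simpa using (exp_cocompact.mono_left (cocompact_eq_atBot_atTop (α := ℝ) ▸ le_sup_left)).neg
  have ht : Tendsto (fun x : ℝ => -rexp (-(1/2) * x^2)) atTop (𝓝 0) := by
    simpa using (exp_cocompact.mono_left (cocompact_eq_atBot_atTop (α := ℝ) ▸ le_sup_right)).neg
  have h := integral_of_hasDerivAt_of_tendsto hderiv
    (integrable_mul_exp_neg_mul_sq one_half_pos) hb ht
  simpa using h

lemma Iint2 : Integrable fun x : ℝ => x^2 * rexp (-(1/2) * x^2) := by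
  have h := integrable_rpow_mul_exp_neg_mul_sq one_half_pos (s := 2) (by norm_num)
  refine h.congr (Filter.Eventually.of_forall fun x => ?_)
  norm_num

lemma I2 : ∫ x : ℝ, x^2 * rexp (-(1/2) * x^2) = √(2*Real.pi) := by
  have hderiv : ∀ x : ℝ, HasDerivAt (fun x : ℝ => -(x * rexp (-(1/2) * x^2)))
      (x^2 * rexp (-(1/2) * x^2) - rexp (-(1/2) * x^2)) x := by
    intro x
    have h1 : HasDerivAt (fun x : ℝ => -(1/2) * x^2) (-(1/2) * (2 * x^1)) x :=
      (hasDerivAt_pow 2 x).const_mul _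
    have : HasDerivAt (fun x : ℝ => -(x * rexp (-(1/2) * x^2)))
        (-(1 * rexp (-(1/2) * x^2) + id x * (rexp (-(1/2) * x^2) * (-(1/2) * (2 * x^1))))) x :=
      ((hasDerivAt_id x).mul h1.exp).neg
    convert this using 1
    simp only [id_eq]
    ring
  have hf' : Integrable fun x : ℝ => x^2 * rexp (-(1/2) * x^2) - rexp (-(1/2) * x^2) :=
    Iint2.sub (integrable_exp_neg_mul_sq one_half_pos)
  have hsq : ∀ (l : Filter ℝ), Tendsto (fun x : ℝ => |x| * rexp (-(1/2) * x^2)) l (𝓝 0) →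
      Tendsto (fun x : ℝ => -(x * rexp (-(1/2) * x^2))) l (𝓝 0) := by
    intro l hl
    refine squeeze_zero_norm (fun x => ?_) hl
    rw [norm_neg, Real.norm_eq_abs, abs_mul, abs_of_pos (Real.exp_pos _)]
  have h := integral_of_hasDerivAt_of_tendsto hderiv hf'
    (hsq _ (abs_exp_cocompact.mono_left (cocompact_eq_atBot_atTop (α := ℝ) ▸ le_sup_left)))
    (hsq _ (abs_exp_cocompact.mono_left (cocompact_eq_atBot_atTop (α := ℝ) ▸ le_sup_right)))
  have h2 := integral_sub Iint2 (integrable_exp_neg_mul_sq one_half_pos)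
  rw [h2] at h
  rw [I0] at h
  linarith [h]

lemma pdf01 (x : ℝ) : gaussianPDFReal 0 1 x = (√(2*Real.pi))⁻¹ * rexp (-(1/2) * x^2) := by
  simp only [gaussianPDFReal, NNReal.coe_one, mul_one, sub_zero]
  congr 1
  ring

lemma gauss_sq_moment (K c : ℝ) :
    ∫⁻ x, ENNReal.ofReal ((K + c * x) ^ 2) ∂(gaussianReal 0 1)
      = ENNReal.ofReal (K^2 + c^2) := by
  have h0 := integrable_exp_neg_mul_sq (one_half_pos (α := ℝ))
  have h1 := integrable_mul_exp_neg_mul_sq (one_half_pos (α := ℝ))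
  have hsqrt_pos : (0:ℝ) < √(2*Real.pi) := Real.sqrt_pos.mpr (by positivity)
  have hint3 : Integrable (fun x : ℝ => (K + c*x)^2 * rexp (-(1/2) * x^2)) := by
    refine (((h0.const_mul (K^2)).add (h1.const_mul (2*K*c))).add
      (Iint2.const_mul (c^2))).congr (Filter.Eventually.of_forall fun x => ?_)
    simp only [Pi.add_apply]
    ring
  have hval : ∫ x : ℝ, (K + c*x)^2 * rexp (-(1/2) * x^2) = (K^2 + c^2) * √(2*Real.pi) := by
    rw [show (fun x : ℝ => (K + c*x)^2 * rexp (-(1/2) * x^2))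
        = fun x : ℝ => K^2 * rexp (-(1/2) * x^2) + (2*K*c) * (x * rexp (-(1/2) * x^2))
            + c^2 * (x^2 * rexp (-(1/2) * x^2)) from funext fun x => by ring]
    have h01 : Integrable (fun x : ℝ => K^2 * rexp (-(1/2) * x^2)
        + (2*K*c) * (x * rexp (-(1/2) * x^2))) := (h0.const_mul _).add (h1.const_mul _)
    rw [integral_add h01 (Iint2.const_mul _),
      integral_add (h0.const_mul _) (h1.const_mul _),
      integral_const_mul, integral_const_mul, integral_const_mul, I0, I1, I2]
    ring
  have hfull_eq : ∀ x : ℝ, gaussianPDFReal 0 1 x * (K + c*x)^2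
      = (√(2*Real.pi))⁻¹ * ((K + c*x)^2 * rexp (-(1/2) * x^2)) := by
    intro x; rw [pdf01]; ring
  have hfull : Integrable (fun x : ℝ => gaussianPDFReal 0 1 x * (K + c*x)^2) := by
    refine (hint3.const_mul ((√(2*Real.pi))⁻¹)).congr
      (Filter.Eventually.of_forall fun x => (hfull_eq x).symm)
  rw [gaussianReal_of_var_ne_zero 0 one_ne_zero,
    lintegral_withDensity_eq_lintegral_mul _ (measurable_gaussianPDF _ _)
      (by fun_prop)]
  have : (fun x : ℝ => (gaussianPDF 0 1 * fun x => ENNReal.ofReal ((K + c * x) ^ 2)) x)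
      = fun x : ℝ => ENNReal.ofReal (gaussianPDFReal 0 1 x * (K + c*x)^2) := by
    funext x
    simp only [Pi.mul_apply, gaussianPDF]
    rw [← ENNReal.ofReal_mul (gaussianPDFReal_nonneg _ _ _)]
  rw [this, ← ofReal_integral_eq_lintegral_ofReal hfull
      (Filter.Eventually.of_forall fun x =>
        mul_nonneg (gaussianPDFReal_nonneg _ _ _) (sq_nonneg _))]
  congr 1
  rw [show (fun x : ℝ => gaussianPDFReal 0 1 x * (K + c*x)^2)
      = fun x : ℝ => (√(2*Real.pi))⁻¹ * ((K + c*x)^2 * rexp (-(1/2) * x^2))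
      from funext hfull_eq]
  rw [integral_const_mul, hval]
  field_simp

end RiskAux


/-- Squared-error risk for estimating `θ` in the bivariate Gaussian model: one observes
`(Y_U, T_O)` jointly normal with mean `(θ, b/√Σ_O)` and covariance
`[[Σ_U, ρ√Σ_U], [ρ√Σ_U, 1]]` (here `sU = Σ_U`, `sO = Σ_O`), constructed from two
independent standard normals. -/
noncomputable def bivRisk (sU sO ρ θ b : ℝ) (δ : ℝ × ℝ → ℝ) : ℝ≥0∞ :=
  ∫⁻ z : ℝ × ℝ,
    ENNReal.ofReal ((δ (θ + Real.sqrt sU * (ρ * z.2 + Real.sqrt (1 - ρ ^ 2) * z.1),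
      b / Real.sqrt sO + z.2) - θ) ^ 2)
    ∂((gaussianReal 0 1).prod (gaussianReal 0 1))

/-- **Risk identity for combined estimators.**  In the bivariate Gaussian model, for any
measurable `δ : ℝ → ℝ` the squared-error risk of
`δ*(Y_U, T_O) = ρ·√Σ_U·δ(T_O) + Y_U − ρ·√Σ_U·T_O` as an estimator of `θ` equals
`ρ²·Σ_U·r(δ, b/√Σ_O) + (1 − ρ²)·Σ_U`. -/
theorem stmt_17 (sU sO ρ : ℝ) (hsU : 0 < sU) (hsO : 0 < sO)
    (hρ : ρ ∈ Set.Ioo (-1 : ℝ) 1) (hρ0 : ρ ≠ 0)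
    (θ b : ℝ) (δ : ℝ → ℝ) (hδ : Measurable δ) :
    bivRisk sU sO ρ θ b
        (fun p => ρ * Real.sqrt sU * δ p.2 + p.1 - ρ * Real.sqrt sU * p.2)
      = ENNReal.ofReal (ρ ^ 2 * sU) * gShiftRisk δ (b / Real.sqrt sO)
        + ENNReal.ofReal ((1 - ρ ^ 2) * sU) := by
  obtain ⟨hρ1, hρ2⟩ := hρ
  have h1ρ : (0:ℝ) ≤ 1 - ρ ^ 2 := by nlinarith
  set μ := b / Real.sqrt sO with hμ
  set a := ρ * Real.sqrt sU with ha
  set c := Real.sqrt sU * Real.sqrt (1 - ρ ^ 2) with hc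
  have ha2 : a ^ 2 = ρ ^ 2 * sU := by
    rw [ha, mul_pow, Real.sq_sqrt hsU.le]
  have hc2 : c ^ 2 = (1 - ρ ^ 2) * sU := by
    rw [hc, mul_pow, Real.sq_sqrt hsU.le, Real.sq_sqrt h1ρ]; ring
  have hgm : Measurable (fun y : ℝ => ENNReal.ofReal ((δ (μ + y) - μ) ^ 2)) :=
    ((((hδ.comp (measurable_const.add measurable_id)).sub measurable_const).pow_const
      2).ennreal_ofReal)
  rw [bivRisk]
  have hfun : (fun z : ℝ × ℝ =>
      ENNReal.ofReal (((fun p : ℝ × ℝ => ρ * Real.sqrt sU * δ p.2 + p.1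
          - ρ * Real.sqrt sU * p.2)
        (θ + Real.sqrt sU * (ρ * z.2 + Real.sqrt (1 - ρ ^ 2) * z.1),
          b / Real.sqrt sO + z.2) - θ) ^ 2))
      = fun z : ℝ × ℝ => ENNReal.ofReal ((a * (δ (μ + z.2) - μ) + c * z.1) ^ 2) := by
    funext z
    congr 1
    rw [ha, hc, hμ]
    ring
  rw [hfun]
  have hm : Measurable (fun z : ℝ × ℝ =>
      ENNReal.ofReal ((a * (δ (μ + z.2) - μ) + c * z.1) ^ 2)) :=
    (((((hδ.comp (measurable_const.add measurable_snd)).sub measurable_const).const_mul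
      a).add (measurable_fst.const_mul c)).pow_const 2).ennreal_ofReal
  rw [lintegral_prod_symm _ hm.aemeasurable]
  have hinner : ∀ y : ℝ,
      ∫⁻ x, ENNReal.ofReal ((a * (δ (μ + y) - μ) + c * x) ^ 2) ∂(gaussianReal 0 1)
        = ENNReal.ofReal ((a * (δ (μ + y) - μ)) ^ 2 + c ^ 2) :=
    fun y => gauss_sq_moment _ c
  rw [lintegral_congr hinner]
  have hsplit : ∀ y : ℝ, ENNReal.ofReal ((a * (δ (μ + y) - μ)) ^ 2 + c ^ 2)
      = ENNReal.ofReal (a ^ 2) * ENNReal.ofReal ((δ (μ + y) - μ) ^ 2)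
        + ENNReal.ofReal (c ^ 2) := by
    intro y
    rw [ENNReal.ofReal_add (sq_nonneg _) (sq_nonneg _), mul_pow,
      ENNReal.ofReal_mul (sq_nonneg a)]
  rw [lintegral_congr hsplit, lintegral_add_right _ measurable_const,
    lintegral_const, measure_univ, mul_one, lintegral_const_mul _ hgm]
  have hmap : gaussianReal μ 1 = (gaussianReal 0 1).map (· + μ) := by
    rw [gaussianReal_map_add_const, zero_add]
  have hrisk : gShiftRisk δ μ = ∫⁻ y, ENNReal.ofReal ((δ (μ + y) - μ) ^ 2)
      ∂(gaussianReal 0 1) := by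
    rw [gShiftRisk, hmap, lintegral_map (f := fun t => ENNReal.ofReal ((δ t - μ) ^ 2)) (((hδ.sub measurable_const).pow_const
      2).ennreal_ofReal) (measurable_add_const μ)]
    exact lintegral_congr fun y => by rw [add_comm]
  rw [← hrisk, ha2, hc2]
end
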